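/- arXiv:1708.08748 — 9 statements merged into one kernel-verified Lean document; each statement's English description precedes it below -/
import Mathlib

section
/- Let f : ℝ → ℝ be given by f(σ) = sgn(σ)·√|σ|. Then for all real numbers σ¹ and σ², |f((σ¹+σ²)/2)| ≥ |(f(σ¹)+f(σ²))/2|. -/
/-- The function `f(σ) = sgn(σ)·√|σ|`. -/
noncomputable def f (σ : ℝ) : ℝ := Real.sign σ * Real.sqrt |σ|

lemma f_of_nonneg {x : ℝ} (h : 0 ≤ x) : f x = Real.sqrt x := by
  rcases eq_or_lt_of_le h with h' | h'
  · simp [f, ← h']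
  · simp [f, Real.sign_of_pos h', abs_of_pos h']

lemma f_of_neg {x : ℝ} (h : x < 0) : f x = -Real.sqrt (-x) := by
  simp [f, Real.sign_of_neg h, abs_of_neg h]

lemma key1 (a b : ℝ) (ha : 0 ≤ a) (hb : 0 ≤ b) :
    (Real.sqrt a + Real.sqrt b) ^ 2 ≤ 2 * (a + b) := by
  nlinarith [Real.sq_sqrt ha, Real.sq_sqrt hb, sq_nonneg (Real.sqrt a - Real.sqrt b)]

lemma key2 (a b : ℝ) (ha : 0 ≤ a) (hb : 0 ≤ b) :
    (Real.sqrt a - Real.sqrt b) ^ 2 ≤ 2 * |a - b| := by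
  rcases le_total a b with h | h
  · rw [abs_of_nonpos (by linarith)]
    have hs : Real.sqrt a ≤ Real.sqrt b := Real.sqrt_le_sqrt h
    nlinarith [Real.sq_sqrt ha, Real.sq_sqrt hb, Real.sqrt_nonneg a, Real.sqrt_nonneg b,
      mul_le_mul_of_nonneg_left hs (Real.sqrt_nonneg a)]
  · rw [abs_of_nonneg (by linarith)]
    have hs : Real.sqrt b ≤ Real.sqrt a := Real.sqrt_le_sqrt h
    nlinarith [Real.sq_sqrt ha, Real.sq_sqrt hb, Real.sqrt_nonneg a, Real.sqrt_nonneg b,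
      mul_le_mul_of_nonneg_left hs (Real.sqrt_nonneg b)]

lemma key (σ1 σ2 : ℝ) : (f σ1 + f σ2) ^ 2 ≤ 2 * |σ1 + σ2| := by
  rcases le_or_gt 0 σ1 with h1 | h1 <;> rcases le_or_gt 0 σ2 with h2 | h2
  · rw [f_of_nonneg h1, f_of_nonneg h2, abs_of_nonneg (by linarith)]
    exact key1 _ _ h1 h2
  · rw [f_of_nonneg h1, f_of_neg h2]
    have := key2 σ1 (-σ2) h1 (by linarith)
    have habs : |σ1 - -σ2| = |σ1 + σ2| := by ring_nf
    rw [habs] at this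
    calc (Real.sqrt σ1 + -Real.sqrt (-σ2)) ^ 2
        = (Real.sqrt σ1 - Real.sqrt (-σ2)) ^ 2 := by ring
      _ ≤ 2 * |σ1 + σ2| := this
  · rw [f_of_neg h1, f_of_nonneg h2]
    have := key2 σ2 (-σ1) h2 (by linarith)
    have habs : |σ2 - -σ1| = |σ1 + σ2| := by rw [sub_neg_eq_add, add_comm]
    rw [habs] at this
    calc (-Real.sqrt (-σ1) + Real.sqrt σ2) ^ 2
        = (Real.sqrt σ2 - Real.sqrt (-σ1)) ^ 2 := by ring
      _ ≤ 2 * |σ1 + σ2| := this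
  · rw [f_of_neg h1, f_of_neg h2, abs_of_neg (by linarith)]
    have := key1 (-σ1) (-σ2) (by linarith) (by linarith)
    calc (-Real.sqrt (-σ1) + -Real.sqrt (-σ2)) ^ 2
        = (Real.sqrt (-σ1) + Real.sqrt (-σ2)) ^ 2 := by ring
      _ ≤ 2 * (-σ1 + -σ2) := this
      _ = 2 * -(σ1 + σ2) := by ring

lemma abs_f (x : ℝ) : |f x| = Real.sqrt |x| := by
  rcases lt_trichotomy x 0 with h | h | h
  · rw [f_of_neg h, abs_neg, abs_of_nonneg (Real.sqrt_nonneg _), abs_of_neg h]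
  · simp [h, f]
  · rw [f_of_nonneg h.le, abs_of_nonneg (Real.sqrt_nonneg _), abs_of_pos h]

theorem abs_f_avg_ge_abs_avg_f (σ1 σ2 : ℝ) :
    |f ((σ1 + σ2) / 2)| ≥ |(f σ1 + f σ2) / 2| := by
  rw [abs_f]
  have h : ((f σ1 + f σ2) / 2) ^ 2 ≤ |(σ1 + σ2) / 2| := by
    rw [abs_div, abs_of_pos (by norm_num : (0:ℝ) < 2)]
    have := key σ1 σ2
    nlinarith
  calc |(f σ1 + f σ2) / 2| = Real.sqrt (((f σ1 + f σ2) / 2) ^ 2) :=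
        (Real.sqrt_sq_eq_abs _).symm
    _ ≤ Real.sqrt |(σ1 + σ2) / 2| := Real.sqrt_le_sqrt h
end

section
/- Let f : ℝ → ℝ be an odd function (f(−σ) = −f(σ) for all σ) that is strictly increasing on ℝ and concave when restricted to [0,∞). Then for all real numbers σ¹ and σ²: (i) the sign of f((σ¹+σ²)/2) equals the sign of (f(σ¹)+f(σ²))/2, and (ii) |f((σ¹+σ²)/2)| ≥ |(f(σ¹)+f(σ²))/2|. -/
theorem sign_and_abs_for_odd_strictMono_concave (f : ℝ → ℝ)
    (hodd : ∀ σ : ℝ, f (-σ) = -f σ)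
    (hmono : StrictMono f)
    (hconc : ConcaveOn ℝ (Set.Ici (0 : ℝ)) f)
    (σ1 σ2 : ℝ) :
    Real.sign (f ((σ1 + σ2) / 2)) = Real.sign ((f σ1 + f σ2) / 2) ∧
      |f ((σ1 + σ2) / 2)| ≥ |(f σ1 + f σ2) / 2| := by
  have hf0 : f 0 = 0 := by
    have h := hodd 0
    rw [neg_zero] at h
    linarith
  -- subadditivity of f on [0, ∞)
  have subadd : ∀ x y : ℝ, 0 ≤ x → 0 ≤ y → f (x + y) ≤ f x + f y := by
    intro x y hx hy
    rcases eq_or_lt_of_le (add_nonneg hx hy) with h | h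
    · have hx0 : x = 0 := by linarith
      have hy0 : y = 0 := by linarith
      simp [hx0, hy0, hf0]
    · have hs : (0:ℝ) < x + y := h
      have h1 := hconc.2 (Set.mem_Ici.2 hs.le) (Set.mem_Ici.2 (le_refl (0:ℝ)))
        (by positivity : (0:ℝ) ≤ x / (x + y)) (by positivity : (0:ℝ) ≤ y / (x + y))
        (by field_simp : x / (x + y) + y / (x + y) = 1)
      have h2 := hconc.2 (Set.mem_Ici.2 hs.le) (Set.mem_Ici.2 (le_refl (0:ℝ)))
        (by positivity : (0:ℝ) ≤ y / (x + y)) (by positivity : (0:ℝ) ≤ x / (x + y))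
        (by field_simp; ring : y / (x + y) + x / (x + y) = 1)
      simp only [smul_eq_mul, mul_zero, add_zero, hf0] at h1 h2
      have e1 : x / (x + y) * (x + y) = x := by field_simp
      have e2 : y / (x + y) * (x + y) = y := by field_simp
      rw [e1] at h1
      rw [e2] at h2
      have : (x / (x + y)) * f (x + y) + (y / (x + y)) * f (x + y) = f (x + y) := by
        field_simp
      linarith
  -- doubling: f (2c) ≤ 2 f c for c ≥ 0
  have hdouble : ∀ c : ℝ, 0 ≤ c → f (2 * c) ≤ 2 * f c := by
    intro c hc
    have h := hconc.2 (Set.mem_Ici.2 (le_refl (0:ℝ))) (Set.mem_Ici.2 (by linarith : (0:ℝ) ≤ 2 * c))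
      (by norm_num : (0:ℝ) ≤ 1/2) (by norm_num : (0:ℝ) ≤ 1/2) (by norm_num : (1/2 : ℝ) + 1/2 = 1)
    simp only [smul_eq_mul, mul_zero, zero_add, hf0, mul_zero] at h
    have e : (1/2 : ℝ) * (2 * c) = c := by ring
    rw [e] at h
    linarith
  -- key lemma (with ordering assumption)
  have key : ∀ a b : ℝ, a ≤ b → 0 ≤ (a + b) / 2 → f a + f b ≤ 2 * f ((a + b) / 2) := by
    intro a b hab hm0
    rcases le_or_gt 0 a with ha | ha
    · have hb : (0:ℝ) ≤ b := le_trans ha hab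
      have h := hconc.2 (Set.mem_Ici.2 ha) (Set.mem_Ici.2 hb)
        (by norm_num : (0:ℝ) ≤ 1/2) (by norm_num : (0:ℝ) ≤ 1/2) (by norm_num : (1/2 : ℝ) + 1/2 = 1)
      simp only [smul_eq_mul] at h
      have e : (1/2 : ℝ) * a + (1/2) * b = (a + b) / 2 := by ring
      rw [e] at h
      linarith
    · set c := (a + b) / 2 with hc
      have hb : b = 2 * c + (-a) := by rw [hc]; ring
      have h1 : f b ≤ f (2 * c) + f (-a) := by
        rw [hb]; exact subadd _ _ (by linarith) (by linarith)
      rw [hodd] at h1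
      have h2 := hdouble c hm0
      linarith
  have hKey : ∀ a b : ℝ, 0 ≤ (a + b) / 2 → f a + f b ≤ 2 * f ((a + b) / 2) := by
    intro a b h
    rcases le_total a b with hab | hab
    · exact key a b hab h
    · have h' := key b a hab (by linarith)
      rw [show (b + a) / 2 = (a + b) / 2 by ring] at h'
      linarith
  -- mirrored key for nonpositive midpoint
  have hKey' : ∀ a b : ℝ, (a + b) / 2 ≤ 0 → 2 * f ((a + b) / 2) ≤ f a + f b := by
    intro a b h
    have h' := hKey (-a) (-b) (by linarith)
    rw [show (-a + -b) / 2 = -((a + b) / 2) by ring, hodd, hodd, hodd] at h'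
    linarith
  rcases lt_trichotomy ((σ1 + σ2) / 2) 0 with hm | hm | hm
  · -- negative midpoint
    have hA : f ((σ1 + σ2) / 2) < 0 := by
      have := hmono hm
      rwa [hf0] at this
    have hB : (f σ1 + f σ2) / 2 < 0 := by
      have h1 : σ2 < -σ1 := by linarith
      have h2 := hmono h1
      rw [hodd] at h2
      linarith
    have hAB := hKey' σ1 σ2 hm.le
    constructor
    · rw [Real.sign_of_neg hA, Real.sign_of_neg hB]
    · rw [abs_of_neg hA, abs_of_neg hB]
      linarith
  · -- zero midpoint
    have h12 : σ2 = -σ1 := by linarith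
    have hB : f σ1 + f σ2 = 0 := by
      rw [h12, hodd]; ring
    rw [hm, hf0, hB]
    norm_num
  · -- positive midpoint
    have hA : 0 < f ((σ1 + σ2) / 2) := by
      have := hmono hm
      rwa [hf0] at this
    have hB : 0 < (f σ1 + f σ2) / 2 := by
      have h1 : -σ1 < σ2 := by linarith
      have h2 := hmono h1
      rw [hodd] at h2
      linarith
    have hAB := hKey σ1 σ2 hm.le
    constructor
    · rw [Real.sign_of_pos hA, Real.sign_of_pos hB]
    · rw [abs_of_pos hA, abs_of_pos hB]
      linarith
end

section
/- Let G be a finite directed graph with node set V and arc set A ⊆ V × V, let β : A → ℝ with β_a > 0 for all a ∈ A, and let π : V → ℝ be node potentials. Let x : A → ℝ be the stationary gas flow induced by π, i.e., x_{(u,w)} = sgn(π_u − π_w)·√(|π_u − π_w| / β_{(u,w)}) for every arc (u,w) ∈ A. If x satisfies supplies and demands b : V → ℝ (outflow minus inflow at every node v equals b_v), then ∑_{v ∈ V} b_v·π_v = ∑_{a ∈ A} β_a·|x_a|³. -/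
open Finset

lemma sign_mul_self_eq_abs (d : ℝ) : Real.sign d * d = |d| := by
  rcases lt_trichotomy d 0 with h | h | h
  · rw [Real.sign_of_neg h, abs_of_neg h]; ring
  · simp [h]
  · rw [Real.sign_of_pos h, abs_of_pos h]; ring

/-- Energy identity for the stationary gas flow induced by node potentials. -/
theorem energy_identity_induced_gas_flow {V : Type*} [Fintype V] [DecidableEq V]
    (A : Finset (V × V)) (β : V × V → ℝ) (hβ : ∀ a ∈ A, 0 < β a)
    (π : V → ℝ) (x : V × V → ℝ)
    (hx : ∀ a ∈ A, x a = Real.sign (π a.1 - π a.2) * Real.sqrt (|π a.1 - π a.2| / β a))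
    (b : V → ℝ)
    (hbal : ∀ v : V,
      (∑ a ∈ A.filter (fun a => a.1 = v), x a) -
        (∑ a ∈ A.filter (fun a => a.2 = v), x a) = b v) :
    ∑ v : V, b v * π v = ∑ a ∈ A, β a * |x a| ^ 3 := by
  have key : ∀ a ∈ A, x a * (π a.1 - π a.2) = β a * |x a| ^ 3 := by
    intro a ha
    have hβa := hβ a ha
    set d := π a.1 - π a.2 with hd
    rcases eq_or_ne d 0 with h0 | h0
    · rw [hx a ha, ← hd, h0]; simp
    · have hq : 0 ≤ |d| / β a := div_nonneg (abs_nonneg d) hβa.le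
      have hsq : Real.sqrt (|d| / β a) ^ 2 = |d| / β a := Real.sq_sqrt hq
      have habs : |x a| = Real.sqrt (|d| / β a) := by
        have hs : |Real.sign d| = 1 := by
          rcases h0.lt_or_gt with h | h
          · rw [Real.sign_of_neg h]; norm_num
          · rw [Real.sign_of_pos h]; norm_num
        rw [hx a ha, ← hd, abs_mul, hs, one_mul, abs_of_nonneg (Real.sqrt_nonneg _)]
      have hx' : x a * d = |d| * Real.sqrt (|d| / β a) := by
        rw [hx a ha, ← hd, mul_comm (Real.sign d), mul_assoc, sign_mul_self_eq_abs,
          mul_comm]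
      rw [hx', habs, pow_succ, hsq, ← mul_assoc, mul_div_cancel₀ _ hβa.ne']
  calc ∑ v : V, b v * π v
      = ∑ v : V, ((∑ a ∈ A.filter (fun a => a.1 = v), x a) -
          (∑ a ∈ A.filter (fun a => a.2 = v), x a)) * π v := by
        refine Finset.sum_congr rfl fun v _ => ?_; rw [hbal v]
    _ = ∑ a ∈ A, x a * (π a.1 - π a.2) := by
        simp only [sub_mul, Finset.sum_sub_distrib, Finset.sum_mul]
        have h1 : ∀ v : V, ∑ a ∈ A.filter (fun a => a.1 = v), x a * π v
            = ∑ a ∈ A.filter (fun a => a.1 = v), x a * π a.1 := by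
          intro v
          refine Finset.sum_congr rfl fun a ha => ?_
          rw [(Finset.mem_filter.mp ha).2]
        have h2 : ∀ v : V, ∑ a ∈ A.filter (fun a => a.2 = v), x a * π v
            = ∑ a ∈ A.filter (fun a => a.2 = v), x a * π a.2 := by
          intro v
          refine Finset.sum_congr rfl fun a ha => ?_
          rw [(Finset.mem_filter.mp ha).2]
        simp only [h1, h2]
        rw [Finset.sum_fiberwise (g := fun a : V × V => a.1) (f := fun a => x a * π a.1),
          Finset.sum_fiberwise (g := fun a : V × V => a.2) (f := fun a => x a * π a.2),
          ← Finset.sum_sub_distrib]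
        exact Finset.sum_congr rfl fun a _ => by ring
    _ = ∑ a ∈ A, β a * |x a| ^ 3 := Finset.sum_congr rfl key
end

section
/- Let G be a finite directed graph with node set V and arc set A ⊆ V × V, let β : A → ℝ with β_a > 0 for all a ∈ A, let s, t ∈ V be distinct, and let π : V → ℝ be node potentials inducing the stationary gas flow x (x_{(u,w)} = sgn(π_u − π_w)·√(|π_u − π_w|/β_{(u,w)})). Suppose x is a stationary gas s-t-flow of value B > 0, i.e., x satisfies supplies and demands b with b_s = B, b_t = −B, and b_v = 0 for all other nodes v. Then π_s − π_t = (∑_{a ∈ A} β_a·|x_a|³)/B; in particular π_s > π_t whenever x is not identically zero. -/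
open Finset

lemma weymouth_energy (b d : ℝ) (hb : 0 < b) :
    (Real.sign d * Real.sqrt (|d| / b)) * d
      = b * |Real.sign d * Real.sqrt (|d| / b)| ^ 3 := by
  rcases lt_trichotomy d 0 with h | h | h
  · rw [Real.sign_of_neg h]
    have hd : |d| = -d := abs_of_neg h
    have hr : (0:ℝ) ≤ -d / b := div_nonneg (by linarith) hb.le
    have hs : Real.sqrt (-d / b) * Real.sqrt (-d / b) = -d / b := Real.mul_self_sqrt hr
    have hnn : 0 ≤ Real.sqrt (-d / b) := Real.sqrt_nonneg _
    have hbs : b * (Real.sqrt (-d / b) * Real.sqrt (-d / b)) = -d := by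
      rw [hs]; field_simp; try ring
    rw [hd]
    rw [abs_of_nonpos (by nlinarith : -1 * Real.sqrt (-d / b) ≤ 0)]
    nlinarith [hbs, hnn]
  · simp [h]
  · rw [Real.sign_of_pos h]
    have hd : |d| = d := abs_of_pos h
    have hr : (0:ℝ) ≤ d / b := div_nonneg h.le hb.le
    have hs : Real.sqrt (d / b) * Real.sqrt (d / b) = d / b := Real.mul_self_sqrt hr
    have hnn : 0 ≤ Real.sqrt (d / b) := Real.sqrt_nonneg _
    have hbs : b * (Real.sqrt (d / b) * Real.sqrt (d / b)) = d := by
      rw [hs]; field_simp; try ring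
    rw [hd, abs_of_nonneg (by nlinarith : (0:ℝ) ≤ 1 * Real.sqrt (d / b))]
    nlinarith [hbs, hnn]

/-- For a stationary gas s-t-flow of value `B > 0` induced by potentials `π`, the potential
difference `π s - π t` equals the total energy divided by `B`; in particular `π s > π t`
whenever the flow is not identically zero. -/
theorem potential_difference_of_st_flow {V : Type*} [Fintype V] [DecidableEq V]
    (A : Finset (V × V)) (β : V × V → ℝ) (hβ : ∀ a ∈ A, 0 < β a)
    (s t : V) (hst : s ≠ t) (π : V → ℝ) (x : V × V → ℝ)
    (hx : ∀ a ∈ A, x a = Real.sign (π a.1 - π a.2) * Real.sqrt (|π a.1 - π a.2| / β a))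
    (B : ℝ) (hB : 0 < B)
    (hbal : ∀ v : V,
      (∑ a ∈ A.filter (fun a => a.1 = v), x a) -
        (∑ a ∈ A.filter (fun a => a.2 = v), x a) =
          if v = s then B else if v = t then -B else 0) :
    π s - π t = (∑ a ∈ A, β a * |x a| ^ 3) / B ∧
      ((∃ a ∈ A, x a ≠ 0) → π t < π s) := by
  have hterm : ∀ a ∈ A, β a * |x a| ^ 3 = x a * (π a.1 - π a.2) := by
    intro a ha
    rw [hx a ha]
    exact (weymouth_energy (β a) (π a.1 - π a.2) (hβ a ha)).symm
  have hsum1 : ∑ a ∈ A, β a * |x a| ^ 3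
      = ∑ a ∈ A, x a * (π a.1 - π a.2) := Finset.sum_congr rfl hterm
  have hfib1 : ∑ a ∈ A, x a * π a.1
      = ∑ v : V, ∑ a ∈ A.filter (fun a => a.1 = v), x a * π a.1 :=
    (Finset.sum_fiberwise_of_maps_to (fun a _ => Finset.mem_univ a.1) _).symm
  have hfib2 : ∑ a ∈ A, x a * π a.2
      = ∑ v : V, ∑ a ∈ A.filter (fun a => a.2 = v), x a * π a.2 :=
    (Finset.sum_fiberwise_of_maps_to (fun a _ => Finset.mem_univ a.2) _).symm
  have hkey : ∑ a ∈ A, β a * |x a| ^ 3 = B * (π s - π t) := by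
    rw [hsum1]
    have : ∑ a ∈ A, x a * (π a.1 - π a.2)
        = ∑ v : V, π v * ((∑ a ∈ A.filter (fun a => a.1 = v), x a) -
            (∑ a ∈ A.filter (fun a => a.2 = v), x a)) := by
      simp only [mul_sub, Finset.sum_sub_distrib]
      rw [hfib1, hfib2]
      congr 1
      · refine Finset.sum_congr rfl fun v _ => ?_
        rw [Finset.mul_sum]
        refine Finset.sum_congr rfl fun a ha => ?_
        have := (Finset.mem_filter.mp ha).2
        rw [this]; ring
      · refine Finset.sum_congr rfl fun v _ => ?_
        rw [Finset.mul_sum]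
        refine Finset.sum_congr rfl fun a ha => ?_
        have := (Finset.mem_filter.mp ha).2
        rw [this]; ring
    rw [this]
    have : ∀ v : V, π v * ((∑ a ∈ A.filter (fun a => a.1 = v), x a) -
            (∑ a ∈ A.filter (fun a => a.2 = v), x a))
        = (if v = s then π v * B else 0) + (if v = t then π v * (-B) else 0) := by
      intro v
      rw [hbal v]
      by_cases h1 : v = s
      · subst h1
        simp [hst]
      · by_cases h2 : v = t
        · subst h2; simp [h1]
        · simp [h1, h2]
    rw [Finset.sum_congr rfl fun v _ => this v, Finset.sum_add_distrib]
    simp only [Finset.sum_ite_eq', Finset.mem_univ, if_true]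
    ring
  have hBne : B ≠ 0 := ne_of_gt hB
  constructor
  · rw [hkey]
    field_simp
  · rintro ⟨a, ha, hxa⟩
    have hpos : 0 < ∑ a ∈ A, β a * |x a| ^ 3 := by
      refine Finset.sum_pos' (fun a ha => mul_nonneg (hβ a ha).le (by positivity)) ⟨a, ha, ?_⟩
      have : 0 < |x a| := abs_pos.mpr hxa
      have := hβ a ha
      positivity
    rw [hkey] at hpos
    nlinarith
end

section
/- Let G be a finite directed graph with node set V and arc set A ⊆ V × V, let s, t ∈ V be distinct, and let π_min ≤ π_max be real potential bounds. Let β, β' : A → ℝ with 0 < β_a ≤ β'_a for all a ∈ A. Then the supremum, over all potential vectors π : V → ℝ with π_min ≤ π_v ≤ π_max for all v whose induced stationary gas flow (with resistances β') is an s-t-flow, of the flow value, is at most the corresponding supremum taken with resistances β. In other words, the value of a maximal feasible stationary gas s-t-flow cannot be increased by increasing the arc resistances. -/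
open Finset

/-- The stationary gas flow induced by node potentials `π` and resistances `β`
(Weymouth's equation). -/
noncomputable def inducedFlow {V : Type*} (β : V × V → ℝ) (π : V → ℝ) (a : V × V) : ℝ :=
  Real.sign (π a.1 - π a.2) * Real.sqrt (|π a.1 - π a.2| / β a)

/-- The set of values of feasible stationary gas s-t-flows for resistances `β`
and potential interval `[πmin, πmax]`. -/
def stFlowValues {V : Type*} [Fintype V] [DecidableEq V] (A : Finset (V × V))
    (β : V × V → ℝ) (s t : V) (πmin πmax : ℝ) : Set ℝ :=
  {q : ℝ | ∃ π : V → ℝ, (∀ v : V, πmin ≤ π v ∧ π v ≤ πmax) ∧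
    ∀ v : V,
      (∑ a ∈ A.filter (fun a => a.1 = v), inducedFlow β π a) -
        (∑ a ∈ A.filter (fun a => a.2 = v), inducedFlow β π a) =
          if v = s then q else if v = t then -q else 0}

open Set

/-! Fix the resistances `β` and minimize the convex energy
`E(π) = ∑ₐ (2/3) |Δₐπ|^(3/2) / √βₐ` over the box potentials with `π s = πmax`, `π t = πmin`.
The partial derivative of `E` in `π v` is the net outflow at `v` of the induced flow, so at a
minimizer `π̂` the flow `x̂` is conserved at every `v ≠ s, t`; on a face of the box the
one-sided condition is complemented by the sign of the flow at an extremal potential.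
Let `q̂` be its value and `D = πmax - πmin`. Summation by parts against `π̂` gives
`q̂ D = ∑ₐ |Δₐπ̂|^(3/2) / √βₐ` and, for a feasible `β'`-flow `x'` of value `q'` induced by `π'`,
`q' D = ∑ₐ x'ₐ Δₐπ̂`. Young's inequality with exponents `3/2` and `3`,
`x' Δ ≤ (2/3) |Δ|^(3/2) / √β + (1/3) β' |x'|³`, then bounds `q' D` by
`(2/3) q̂ D + (1/3) q' (π' s - π' t) ≤ (2/3) q̂ D + (1/3) q' D` when `q' > 0`, while `q̂ ≥ 0`. -/

lemma Real.sign_mul_self (r : ℝ) : Real.sign r * r = |r| := by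
  rcases lt_trichotomy r 0 with h | rfl | h
  · rw [Real.sign_of_neg h, abs_of_neg h]; ring
  · simp
  · rw [Real.sign_of_pos h, abs_of_pos h]; ring

lemma hasDerivAt_abs_mul_sqrt_abs (x : ℝ) :
    HasDerivAt (fun y => |y| * √|y|) (3 / 2 * (Real.sign x * √|x|)) x := by
  have hpow : (fun y : ℝ => |y| * √|y|) = fun y => |y| ^ (3 / 2 : ℝ) := by
    funext y
    rw [Real.sqrt_eq_rpow, ← Real.rpow_one_add' (abs_nonneg y) (by norm_num)]
    norm_num
  rw [hpow]
  convert hasDerivAt_abs_rpow x (by norm_num : (1 : ℝ) < 3 / 2) using 1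
  rcases eq_or_ne x 0 with rfl | hx
  · simp
  have hsqrt : √|x| = |x| ^ (3 / 2 - 2 : ℝ) * |x| := by
    rw [← Real.rpow_add_one (abs_ne_zero.2 hx), Real.sqrt_eq_rpow]
    norm_num
  rcases hx.lt_or_gt with hx | hx
  · rw [Real.sign_of_neg hx, hsqrt, abs_of_neg hx]; ring
  · rw [Real.sign_of_pos hx, hsqrt, abs_of_pos hx]; ring

lemma HasDerivAt.nonneg_of_isMinOn_Icc {g : ℝ → ℝ} {d r : ℝ} (hg : HasDerivAt g d 0)
    (hr : 0 < r) (hmin : IsMinOn g (Icc 0 r) 0) : 0 ≤ d := by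
  have hcone : r - 0 ∈ posTangentConeAt (Icc 0 r) (0 : ℝ) :=
    sub_mem_posTangentConeAt_of_segment_subset (segment_eq_Icc hr.le).subset
  have := hmin.localize.hasFDerivWithinAt_nonneg hg.hasFDerivAt.hasFDerivWithinAt hcone
  rw [sub_zero, ContinuousLinearMap.toSpanSingleton_apply, smul_eq_mul] at this
  exact nonneg_of_mul_nonneg_right this hr

lemma mul_le_young_three_halves (x Δ : ℝ) {b : ℝ} (hb : 0 < b) :
    x * Δ ≤ 2 / 3 * (|Δ| * √|Δ| / √b) + 1 / 3 * (b * |x| ^ 3) := by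
  obtain ⟨c, hc, rfl⟩ : ∃ c, 0 < c ∧ b = c ^ 2 :=
    ⟨√b, Real.sqrt_pos.2 hb, (Real.sq_sqrt hb.le).symm⟩
  obtain ⟨u, hu, hΔ⟩ : ∃ u, 0 ≤ u ∧ |Δ| = u ^ 2 :=
    ⟨√|Δ|, Real.sqrt_nonneg _, (Real.sq_sqrt (abs_nonneg _)).symm⟩
  have hamgm := mul_nonneg (sq_nonneg (u - |x| * c)) (by positivity : 0 ≤ 2 * u + |x| * c)
  calc x * Δ ≤ |x| * |Δ| := by rw [← abs_mul]; exact le_abs_self _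
    _ ≤ 2 / 3 * (|Δ| * √|Δ| / √(c ^ 2)) + 1 / 3 * (c ^ 2 * |x| ^ 3) := by
      rw [hΔ, Real.sqrt_sq hu, Real.sqrt_sq hc.le, mul_div_assoc', div_add' _ _ _ hc.ne',
        le_div_iff₀ hc]
      nlinarith

section Network

variable {V : Type*} [DecidableEq V] (A : Finset (V × V))

noncomputable def netOutflow (x : V × V → ℝ) (v : V) : ℝ :=
  (∑ a ∈ A.filter (fun a => a.1 = v), x a) - ∑ a ∈ A.filter (fun a => a.2 = v), x a

def stSupply (s t : V) (q : ℝ) (v : V) : ℝ :=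
  if v = s then q else if v = t then -q else 0

variable [Fintype V]

theorem sum_mul_sub_eq_sum_mul_netOutflow (x : V × V → ℝ) (σ : V → ℝ) :
    ∑ a ∈ A, x a * (σ a.1 - σ a.2) = ∑ v, σ v * netOutflow A x v := by
  simp only [netOutflow, Finset.sum_filter, Finset.mul_sum, mul_sub, Finset.sum_sub_distrib]
  rw [Finset.sum_comm, Finset.sum_comm (s := Finset.univ) (t := A)]
  simp [mul_comm]

theorem sum_netOutflow (x : V × V → ℝ) : ∑ v, netOutflow A x v = 0 := by
  simpa using (sum_mul_sub_eq_sum_mul_netOutflow A x 1).symm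

variable {s t : V}

theorem sum_mul_stSupply (hst : s ≠ t) (q : ℝ) (σ : V → ℝ) :
    ∑ v, σ v * stSupply s t q v = q * (σ s - σ t) := by
  rw [Fintype.sum_eq_add s t hst fun v hv => by simp [stSupply, hv.1, hv.2]]
  simp only [stSupply, ↓reduceIte, hst.symm, mul_neg]
  ring

theorem sum_mul_sub_eq_of_netOutflow_eq_stSupply (hst : s ≠ t) {x : V × V → ℝ} {q : ℝ}
    (hx : netOutflow A x = stSupply s t q) (σ : V → ℝ) :
    ∑ a ∈ A, x a * (σ a.1 - σ a.2) = q * (σ s - σ t) := by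
  rw [sum_mul_sub_eq_sum_mul_netOutflow, hx, sum_mul_stSupply hst]

theorem netOutflow_eq_stSupply_of_forall_ne (hst : s ≠ t) {x : V × V → ℝ}
    (h : ∀ v, v ≠ s → v ≠ t → netOutflow A x v = 0) :
    netOutflow A x = stSupply s t (netOutflow A x s) := by
  have hsum := sum_netOutflow A x
  rw [Fintype.sum_eq_add s t hst fun v hv => h v hv.1 hv.2] at hsum
  funext v
  by_cases hvs : v = s
  · simp [stSupply, hvs]
  by_cases hvt : v = t
  · simp only [hvt, stSupply, hst.symm, ↓reduceIte]
    linarith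
  simp [stSupply, hvs, hvt, h v hvs hvt]

end Network

section Flow

variable {V : Type*} (β : V × V → ℝ) (π : V → ℝ)

theorem inducedFlow_mul_sub (a : V × V) :
    inducedFlow β π a * (π a.1 - π a.2) =
      |π a.1 - π a.2| * √|π a.1 - π a.2| / √(β a) := by
  rw [inducedFlow, Real.sqrt_div (abs_nonneg _), ← Real.sign_mul_self]
  ring

theorem abs_inducedFlow (a : V × V) :
    |inducedFlow β π a| = √(|π a.1 - π a.2| / β a) := by
  rw [inducedFlow, abs_mul, abs_of_nonneg (Real.sqrt_nonneg _)]
  rcases eq_or_ne (π a.1 - π a.2) 0 with h | h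
  · simp [h]
  · rcases h.lt_or_gt with h | h <;> simp [Real.sign_of_neg, Real.sign_of_pos, h]

theorem mul_abs_inducedFlow_pow_three {a : V × V} (ha : 0 < β a) :
    β a * |inducedFlow β π a| ^ 3 = inducedFlow β π a * (π a.1 - π a.2) := by
  rw [abs_inducedFlow, inducedFlow_mul_sub, pow_succ, Real.sq_sqrt (by positivity),
    Real.sqrt_div (abs_nonneg _)]
  field_simp

variable {β π}

theorem inducedFlow_nonneg {a : V × V} (h : π a.2 ≤ π a.1) : 0 ≤ inducedFlow β π a := by
  rcases (sub_nonneg.2 h).eq_or_lt with h | h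
  · simp [inducedFlow, ← h]
  · rw [inducedFlow, Real.sign_of_pos h, one_mul]
    exact Real.sqrt_nonneg _

theorem inducedFlow_nonpos {a : V × V} (h : π a.1 ≤ π a.2) : inducedFlow β π a ≤ 0 := by
  rcases (sub_nonpos.2 h).eq_or_lt with h | h
  · simp [inducedFlow, h]
  · rw [inducedFlow, Real.sign_of_neg h, neg_one_mul, neg_nonpos]
    exact Real.sqrt_nonneg _

variable [DecidableEq V] (A : Finset (V × V)) {v : V}

theorem netOutflow_inducedFlow_nonneg_of_forall_le (h : ∀ u, π u ≤ π v) :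
    0 ≤ netOutflow A (inducedFlow β π) v := by
  rw [netOutflow, sub_nonneg]
  refine (Finset.sum_nonpos fun a ha => ?_).trans (Finset.sum_nonneg fun a ha => ?_)
  · exact inducedFlow_nonpos (by rw [(Finset.mem_filter.1 ha).2]; exact h _)
  · exact inducedFlow_nonneg (by rw [(Finset.mem_filter.1 ha).2]; exact h _)

theorem netOutflow_inducedFlow_nonpos_of_forall_ge (h : ∀ u, π v ≤ π u) :
    netOutflow A (inducedFlow β π) v ≤ 0 := by
  rw [netOutflow, sub_nonpos]
  refine (Finset.sum_nonpos fun a ha => ?_).trans (Finset.sum_nonneg fun a ha => ?_)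
  · exact inducedFlow_nonpos (by rw [(Finset.mem_filter.1 ha).2]; exact h _)
  · exact inducedFlow_nonneg (by rw [(Finset.mem_filter.1 ha).2]; exact h _)

end Flow

section Energy

variable {V : Type*} (A : Finset (V × V)) (β : V × V → ℝ)

noncomputable def energy (π : V → ℝ) : ℝ :=
  ∑ a ∈ A, 2 / 3 * (|π a.1 - π a.2| * √|π a.1 - π a.2| / √(β a))

theorem hasDerivAt_energy_add_smul (π y : V → ℝ) :
    HasDerivAt (fun ε : ℝ => energy A β (π + ε • y))
      (∑ a ∈ A, inducedFlow β π a * (y a.1 - y a.2)) 0 := by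
  refine HasDerivAt.fun_sum fun a _ => ?_
  have hdrop :
      HasDerivAt (fun ε : ℝ => (π + ε • y) a.1 - (π + ε • y) a.2) (y a.1 - y a.2) 0 := by
    simp only [Pi.add_apply, Pi.smul_apply, smul_eq_mul]
    exact (((hasDerivAt_id 0).mul_const _).const_add _).sub
      (((hasDerivAt_id 0).mul_const _).const_add _) |>.congr_deriv (by ring)
  have := (((hasDerivAt_abs_mul_sqrt_abs _).comp 0 hdrop).div_const (√(β a))).const_mul (2 / 3)
  refine this.congr_deriv ?_
  rw [zero_smul, add_zero, inducedFlow, Real.sqrt_div (abs_nonneg _)]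
  ring

end Energy

section Minimizer

variable {V : Type*} (A : Finset (V × V)) (β : V × V → ℝ)

def saturatedPotentials (s t : V) (πmin πmax : ℝ) : Set (V → ℝ) :=
  (univ.pi fun _ => Icc πmin πmax) ∩ {π | π s = πmax ∧ π t = πmin}

variable {s t : V} {πmin πmax : ℝ}

theorem exists_isMinOn_energy (hst : s ≠ t) (hπ : πmin ≤ πmax) :
    ∃ π ∈ saturatedPotentials s t πmin πmax,
      IsMinOn (energy A β) (saturatedPotentials s t πmin πmax) π := by
  classical
  refine IsCompact.exists_isMinOn ?_ ?_ ?_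
  · exact (isCompact_univ_pi fun _ => isCompact_Icc).inter_right
      ((isClosed_eq (continuous_apply s) continuous_const).inter
        (isClosed_eq (continuous_apply t) continuous_const))
  · refine ⟨fun u => if u = s then πmax else πmin, fun u _ => ?_, by simp, by simp [hst.symm]⟩
    dsimp only
    split_ifs <;> simp [hπ]
  · unfold energy
    fun_prop

variable [DecidableEq V] [Fintype V]

theorem mul_netOutflow_nonneg_of_isMinOn {K : Set (V → ℝ)} {π : V → ℝ}
    (hmin : IsMinOn (energy A β) K π) {v : V} {c r : ℝ} (hr : 0 < r)
    (hK : ∀ ε ∈ Icc 0 r, π + ε • Pi.single v c ∈ K) :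
    0 ≤ c * netOutflow A (inducedFlow β π) v := by
  have hderiv := hasDerivAt_energy_add_smul A β π (Pi.single v c)
  rw [sum_mul_sub_eq_sum_mul_netOutflow] at hderiv
  simp only [Pi.single_apply, ite_mul, zero_mul, Finset.sum_ite_eq', Finset.mem_univ,
    if_true] at hderiv
  refine hderiv.nonneg_of_isMinOn_Icc hr (isMinOn_iff.2 fun ε hε => ?_)
  simpa using isMinOn_iff.1 hmin _ (hK ε hε)

theorem netOutflow_inducedFlow_eq_zero_of_isMinOn {π : V → ℝ}
    (hπ : π ∈ saturatedPotentials s t πmin πmax)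
    (hmin : IsMinOn (energy A β) (saturatedPotentials s t πmin πmax) π) {v : V}
    (hvs : v ≠ s) (hvt : v ≠ t) : netOutflow A (inducedFlow β π) v = 0 := by
  obtain ⟨hbox, hs, ht⟩ := hπ
  replace hbox : ∀ u, π u ∈ Icc πmin πmax := fun u => hbox u (mem_univ u)
  have hK : ∀ c ε, π v + ε * c ∈ Icc πmin πmax →
      π + ε • Pi.single v c ∈ saturatedPotentials s t πmin πmax := by
    intro c ε h
    refine ⟨fun u _ => ?_, by simpa [hvs.symm] using hs, by simpa [hvt.symm] using ht⟩
    by_cases hu : u = v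
    · subst hu
      simpa using h
    · simpa [hu] using hbox u
  apply le_antisymm
  · rcases (hbox v).1.eq_or_lt with hbot | hbot
    · exact netOutflow_inducedFlow_nonpos_of_forall_ge A fun u => hbot ▸ (hbox u).1
    · have := mul_netOutflow_nonneg_of_isMinOn A β hmin (sub_pos.2 hbot) fun ε hε =>
        hK (-1) ε ⟨by linarith [hε.2], by linarith [hε.1, (hbox v).2]⟩
      linarith
  · rcases (hbox v).2.eq_or_lt with htop | htop
    · exact netOutflow_inducedFlow_nonneg_of_forall_le A fun u => htop ▸ (hbox u).2
    · have := mul_netOutflow_nonneg_of_isMinOn A β hmin (sub_pos.2 htop) fun ε hε =>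
        hK 1 ε ⟨by linarith [hε.1, (hbox v).1], by linarith [hε.2]⟩
      linarith

end Minimizer

section Values

variable {V : Type*} [Fintype V] [DecidableEq V] (A : Finset (V × V)) {s t : V}
  {πmin πmax : ℝ}

theorem mem_stFlowValues_iff {β : V × V → ℝ} {q : ℝ} :
    q ∈ stFlowValues A β s t πmin πmax ↔ ∃ π : V → ℝ, (∀ v, πmin ≤ π v ∧ π v ≤ πmax) ∧
      netOutflow A (inducedFlow β π) = stSupply s t q := by
  simp only [stFlowValues, funext_iff]
  rfl

theorem zero_mem_stFlowValues (β : V × V → ℝ) (hπ : πmin ≤ πmax) :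
    0 ∈ stFlowValues A β s t πmin πmax := by
  refine ⟨fun _ => πmin, fun _ => ⟨le_rfl, hπ⟩, fun v => ?_⟩
  simp [inducedFlow]

theorem eq_zero_of_mem_stFlowValues_self {β : V × V → ℝ} {c q : ℝ}
    (hq : q ∈ stFlowValues A β s t c c) : q = 0 := by
  obtain ⟨π, hπ, hflow⟩ := hq
  have hconst : ∀ v, π v = c := fun v => le_antisymm (hπ v).2 (hπ v).1
  simpa [inducedFlow, hconst] using (hflow s).symm

theorem le_of_netOutflow_eq_stSupply (hst : s ≠ t) (hlt : πmin < πmax) {β β' : V × V → ℝ}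
    (hβ : ∀ a ∈ A, 0 < β a) (hββ' : ∀ a ∈ A, β a ≤ β' a) {π π' : V → ℝ} {q q' : ℝ}
    (hs : π s = πmax) (ht : π t = πmin) (hq : netOutflow A (inducedFlow β π) = stSupply s t q)
    (hπ' : ∀ v, πmin ≤ π' v ∧ π' v ≤ πmax)
    (hq' : netOutflow A (inducedFlow β' π') = stSupply s t q') : q' ≤ q := by
  have hdrop : ∑ a ∈ A, inducedFlow β π a * (π a.1 - π a.2) = q * (πmax - πmin) := by
    rw [sum_mul_sub_eq_of_netOutflow_eq_stSupply A hst hq, hs, ht]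
  have hdrop' : ∑ a ∈ A, inducedFlow β' π' a * (π a.1 - π a.2) = q' * (πmax - πmin) := by
    rw [sum_mul_sub_eq_of_netOutflow_eq_stSupply A hst hq', hs, ht]
  have harc : ∀ a ∈ A, inducedFlow β' π' a * (π a.1 - π a.2) ≤
      2 / 3 * (inducedFlow β π a * (π a.1 - π a.2)) +
        1 / 3 * (inducedFlow β' π' a * (π' a.1 - π' a.2)) := by
    intro a ha
    rw [inducedFlow_mul_sub β π,
      ← mul_abs_inducedFlow_pow_three β' π' ((hβ a ha).trans_le (hββ' a ha))]
    calc _ ≤ _ := mul_le_young_three_halves _ _ (hβ a ha)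
      _ ≤ _ := by gcongr; exact hββ' a ha
  have hsum := Finset.sum_le_sum harc
  rw [hdrop', Finset.sum_add_distrib, ← Finset.mul_sum, ← Finset.mul_sum, hdrop,
    sum_mul_sub_eq_of_netOutflow_eq_stSupply A hst hq'] at hsum
  have hD : 0 < πmax - πmin := sub_pos.2 hlt
  rcases le_or_gt q' 0 with hq'0 | hq'0
  · have hq0 : 0 ≤ q * (πmax - πmin) :=
      hdrop ▸ Finset.sum_nonneg fun a _ => by rw [inducedFlow_mul_sub]; positivity
    exact hq'0.trans (nonneg_of_mul_nonneg_left hq0 hD)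
  · have : q' * (π' s - π' t) ≤ q' * (πmax - πmin) :=
      mul_le_mul_of_nonneg_left (by linarith [(hπ' s).2, (hπ' t).1]) hq'0.le
    exact le_of_mul_le_mul_right (by linarith) hD

theorem exists_mem_stFlowValues_forall_le (hst : s ≠ t) (hπ : πmin ≤ πmax)
    {β : V × V → ℝ} (hβ : ∀ a ∈ A, 0 < β a) :
    ∃ q ∈ stFlowValues A β s t πmin πmax, ∀ β' : V × V → ℝ, (∀ a ∈ A, β a ≤ β' a) →
      ∀ q' ∈ stFlowValues A β' s t πmin πmax, q' ≤ q := by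
  rcases hπ.eq_or_lt with rfl | hlt
  · exact ⟨0, zero_mem_stFlowValues A β le_rfl, fun β' _ q' hq' =>
      (eq_zero_of_mem_stFlowValues_self A hq').le⟩
  obtain ⟨π, hπK, hmin⟩ := exists_isMinOn_energy A β hst hπ
  have hflow := netOutflow_eq_stSupply_of_forall_ne A hst fun v hvs hvt =>
    netOutflow_inducedFlow_eq_zero_of_isMinOn A β hπK hmin hvs hvt
  refine ⟨_, (mem_stFlowValues_iff A).2 ⟨π, fun v => hπK.1 v (mem_univ v), hflow⟩,
    fun β' hββ' q' hq' => ?_⟩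
  obtain ⟨π', hπ', hq'⟩ := (mem_stFlowValues_iff A).1 hq'
  exact le_of_netOutflow_eq_stSupply A hst hlt hβ hββ' hπK.2.1 hπK.2.2 hflow hπ' hq'

end Values

/-- Increasing arc resistances cannot increase the value of a maximal feasible
stationary gas s-t-flow (Calvert–Keady; Theorem 1 of the paper). -/
theorem max_st_flow_antitone_in_resistances {V : Type*} [Fintype V] [DecidableEq V]
    (A : Finset (V × V)) (s t : V) (hst : s ≠ t) (πmin πmax : ℝ) (hπ : πmin ≤ πmax)
    (β β' : V × V → ℝ) (hβ : ∀ a ∈ A, 0 < β a) (hββ' : ∀ a ∈ A, β a ≤ β' a) :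
    sSup (stFlowValues A β' s t πmin πmax) ≤ sSup (stFlowValues A β s t πmin πmax) := by
  obtain ⟨q, hq, hle⟩ := exists_mem_stFlowValues_forall_le A hst hπ hβ
  have hbdd : BddAbove (stFlowValues A β s t πmin πmax) := ⟨q, hle β fun _ _ => le_rfl⟩
  exact csSup_le ⟨0, zero_mem_stFlowValues A β' hπ⟩ fun q' hq' =>
    (hle β' hββ' q' hq').trans (le_csSup hbdd hq)
end

section
/- Let G be a finite directed graph with node set V and arc set A ⊆ V × V, arc resistances β : A → ℝ with β_a > 0, distinct nodes s, t ∈ V, and potential interval [π_min, π_max]. The supremum of the values of feasible 2-stage gas s-t-flows equals twice the supremum of the values of feasible stationary gas s-t-flows. Equivalently, taking two copies of a maximum feasible stationary gas s-t-flow yields an optimal solution to the maximum 2-stage gas s-t-flow problem. -/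
open Finset

/-- The node balance (outflow minus inflow) at node `v` of the stationary gas flow
induced by `π`. -/
noncomputable def balance {V : Type*} [DecidableEq V] (A : Finset (V × V))
    (β : V × V → ℝ) (π : V → ℝ) (v : V) : ℝ :=
  (∑ a ∈ A.filter (fun a => a.1 = v), inducedFlow β π a) -
    (∑ a ∈ A.filter (fun a => a.2 = v), inducedFlow β π a)

/-- The set of values of feasible stationary gas s-t-flows. -/
def statValues {V : Type*} [Fintype V] [DecidableEq V] (A : Finset (V × V))
    (β : V × V → ℝ) (s t : V) (πmin πmax : ℝ) : Set ℝ :=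
  {q : ℝ | ∃ π : V → ℝ, (∀ v : V, πmin ≤ π v ∧ π v ≤ πmax) ∧
    ∀ v : V, balance A β π v = if v = s then q else if v = t then -q else 0}

/-- The set of values of feasible 2-stage gas s-t-flows. -/
def twoStageValues {V : Type*} [Fintype V] [DecidableEq V] (A : Finset (V × V))
    (β : V × V → ℝ) (s t : V) (πmin πmax : ℝ) : Set ℝ :=
  {q : ℝ | ∃ π₁ π₂ : V → ℝ, (∀ v : V, πmin ≤ π₁ v ∧ π₁ v ≤ πmax) ∧
    (∀ v : V, πmin ≤ π₂ v ∧ π₂ v ≤ πmax) ∧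
    ∀ v : V, balance A β π₁ v + balance A β π₂ v =
      if v = s then q else if v = t then -q else 0}

/-!
Averaging the two stages of a feasible 2-stage flow of value `q` gives an arc flow `x` of
value `q / 2`. As `u ↦ u |u|` is odd and convex on `[0, ∞)`,
`|(u + v)/2|³ ≤ (u + v)/2 · (u|u| + v|v|)/2`, so by Weymouth's equation the energy `∑ β |x|³` is
at most the work `(q / 2) (πmax - πmin)` done by the averaged potentials.

Minimising the dual energy `∑ |π u - π w|^(3/2) / √β` over potentials with `π s = πmax`,
`π t = πmin` gives a stationary s-t-flow `y` of some value `q*`; clamping to `[πmin, πmax]` does not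
increase the dual energy, so the minimiser is feasible. Its energy is `q* (πmax - πmin)`, and
Young's inequality `3 x y|y| ≤ |x|³ + 2|y|³`, summed against the pressure drops of `y`, gives
`3 (q/2) (πmax - πmin) ≤ (q/2) (πmax - πmin) + 2 q* (πmax - πmin)`, i.e. `q ≤ 2 q*`.
Running `y` in both stages attains `2 q*`.
-/

namespace GasFlow

theorem mul_sign_mul_sqrt_mul_abs {b : ℝ} (hb : 0 < b) (d : ℝ) :
    b * (Real.sign d * √(|d| / b) * |Real.sign d * √(|d| / b)|) = d := by
  have hsq : √(|d| / b) * √(|d| / b) = |d| / b := Real.mul_self_sqrt (by positivity)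
  rcases lt_trichotomy d 0 with hd | rfl | hd
  · rw [Real.sign_of_neg hd, neg_one_mul, abs_neg, abs_of_nonneg (Real.sqrt_nonneg _), neg_mul,
      hsq, abs_of_neg hd]
    field_simp
  · simp
  · rw [Real.sign_of_pos hd, one_mul, abs_of_nonneg (Real.sqrt_nonneg _), hsq, abs_of_pos hd]
    field_simp

theorem three_mul_mul_mul_abs_le (x y : ℝ) : 3 * (x * (y * |y|)) ≤ |x| ^ 3 + 2 * |y| ^ 3 := by
  have hxy : x * (y * |y|) ≤ |x| * |y| ^ 2 := by
    rw [sq, abs_mul_abs_self, ← abs_mul_abs_self y]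
    calc x * (y * |y|) ≤ |x * (y * |y|)| := le_abs_self _
      _ = |x| * (|y| * |y|) := by rw [abs_mul, abs_mul, abs_abs]
  nlinarith [mul_nonneg (sq_nonneg (|x| - |y|)) (by positivity : (0 : ℝ) ≤ |x| + 2 * |y|)]

theorem abs_add_div_two_pow_three_le_of_nonneg {u v : ℝ} (h : 0 ≤ u + v) :
    |(u + v) / 2| ^ 3 ≤ (u + v) / 2 * ((u * |u| + v * |v|) / 2) := by
  rw [abs_of_nonneg (by linarith)]
  rcases le_total 0 u with hu | hu <;> rcases le_total 0 v with hv | hv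
  · rw [abs_of_nonneg hu, abs_of_nonneg hv]
    nlinarith [mul_nonneg h (sq_nonneg (u - v))]
  · rw [abs_of_nonneg hu, abs_of_nonpos hv]
    nlinarith [mul_nonneg (mul_nonneg h h) (by linarith : (0:ℝ) ≤ u - 3 * v)]
  · rw [abs_of_nonpos hu, abs_of_nonneg hv]
    nlinarith [mul_nonneg (mul_nonneg h h) (by linarith : (0:ℝ) ≤ v - 3 * u)]
  · obtain rfl : u = -v := by linarith
    simp

theorem abs_add_div_two_pow_three_le (u v : ℝ) :
    |(u + v) / 2| ^ 3 ≤ (u + v) / 2 * ((u * |u| + v * |v|) / 2) := by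
  rcases le_total 0 (u + v) with h | h
  · exact abs_add_div_two_pow_three_le_of_nonneg h
  · have := abs_add_div_two_pow_three_le_of_nonneg (u := -u) (v := -v) (by linarith)
    simp only [abs_neg, ← neg_add, neg_div] at this
    linarith

theorem hasDerivAt_abs_rpow_three_halves_div_sqrt (b d : ℝ) :
    HasDerivAt (fun d : ℝ => |d| ^ (3 / 2 : ℝ) / √b) (3 / 2 * (Real.sign d * √(|d| / b))) d := by
  have key : |d| ^ (3 / 2 - 2 : ℝ) * d = Real.sign d * √|d| := by
    rcases eq_or_ne d 0 with rfl | hd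
    · simp
    have hsqrt : |d| ^ (3 / 2 - 2 : ℝ) * |d| = √|d| := by
      rw [← Real.rpow_add_one (abs_ne_zero.2 hd), Real.sqrt_eq_rpow]
      norm_num
    rcases hd.lt_or_gt with hd | hd
    · rw [Real.sign_of_neg hd, ← hsqrt, abs_of_neg hd]
      ring
    · rw [Real.sign_of_pos hd, ← hsqrt, abs_of_pos hd, one_mul]
  refine ((hasDerivAt_abs_rpow d (by norm_num : (1 : ℝ) < 3 / 2)).div_const √b).congr_deriv ?_
  rw [Real.sqrt_div (abs_nonneg d), mul_assoc, key]
  ring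

theorem mul_inducedFlow_mul_abs {V : Type*} {β : V × V → ℝ} {π : V → ℝ} {a : V × V}
    (ha : 0 < β a) : β a * (inducedFlow β π a * |inducedFlow β π a|) = π a.1 - π a.2 :=
  mul_sign_mul_sqrt_mul_abs ha _

section NetOutflow

variable {V : Type*} [DecidableEq V] (A : Finset (V × V))

def netOutflow (x : V × V → ℝ) (v : V) : ℝ :=
  (∑ a ∈ A.filter (fun a => a.1 = v), x a) - (∑ a ∈ A.filter (fun a => a.2 = v), x a)

def stSupply (s t : V) (q : ℝ) (v : V) : ℝ :=
  if v = s then q else if v = t then -q else 0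

theorem balance_eq_netOutflow (β : V × V → ℝ) (π : V → ℝ) (v : V) :
    balance A β π v = netOutflow A (inducedFlow β π) v :=
  rfl

theorem balance_eq_zero_of_forall_eq (β : V × V → ℝ) {π : V → ℝ} {c : ℝ} (hπ : ∀ v, π v = c)
    (v : V) : balance A β π v = 0 := by
  simp [balance, inducedFlow, hπ]

theorem netOutflow_add_div_two (x y : V × V → ℝ) (v : V) :
    netOutflow A (fun a => (x a + y a) / 2) v = (netOutflow A x v + netOutflow A y v) / 2 := by
  simp only [netOutflow, ← Finset.sum_div, Finset.sum_add_distrib]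
  ring

variable [Fintype V]

theorem sum_mul_sub_eq_sum_netOutflow_mul (x : V × V → ℝ) (ψ : V → ℝ) :
    ∑ a ∈ A, x a * (ψ a.1 - ψ a.2) = ∑ v, netOutflow A x v * ψ v := by
  have fiberwise : ∀ g : V × V → V,
      ∑ v, (∑ a ∈ A.filter (fun a => g a = v), x a) * ψ v = ∑ a ∈ A, x a * ψ (g a) := by
    intro g
    rw [← Finset.sum_fiberwise A g (fun a => x a * ψ (g a))]
    refine Finset.sum_congr rfl fun v _ => ?_
    rw [Finset.sum_mul]
    exact Finset.sum_congr rfl fun a ha => by rw [(Finset.mem_filter.1 ha).2]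
  simp only [netOutflow, sub_mul, Finset.sum_sub_distrib, mul_sub, fiberwise]

theorem sum_netOutflow_eq_zero (x : V × V → ℝ) : ∑ v, netOutflow A x v = 0 := by
  simpa using (sum_mul_sub_eq_sum_netOutflow_mul A x 1).symm

theorem sum_stSupply_mul {s t : V} (hst : s ≠ t) (q : ℝ) (ψ : V → ℝ) :
    ∑ v, stSupply s t q v * ψ v = q * (ψ s - ψ t) := by
  rw [Finset.sum_eq_add s t hst (fun v _ hv => by simp [stSupply, hv.1, hv.2])
    (by simp) (by simp)]
  simp [stSupply, hst.symm]
  ring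

theorem sum_mul_sub_eq_of_netOutflow_eq_stSupply {s t : V} (hst : s ≠ t) {x : V × V → ℝ}
    {q : ℝ} (hx : netOutflow A x = stSupply s t q) (ψ : V → ℝ) :
    ∑ a ∈ A, x a * (ψ a.1 - ψ a.2) = q * (ψ s - ψ t) := by
  rw [sum_mul_sub_eq_sum_netOutflow_mul, hx, sum_stSupply_mul hst]

theorem netOutflow_eq_stSupply {s t : V} (hst : s ≠ t) {x : V × V → ℝ}
    (hx : ∀ v, v ≠ s → v ≠ t → netOutflow A x v = 0) :
    netOutflow A x = stSupply s t (netOutflow A x s) := by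
  have hsum := sum_netOutflow_eq_zero A x
  rw [Finset.sum_eq_add s t hst (fun v _ hv => hx v hv.1 hv.2) (by simp) (by simp)] at hsum
  ext v
  by_cases hvs : v = s
  · simp [stSupply, hvs]
  by_cases hvt : v = t
  · subst hvt
    simp only [stSupply, if_neg hst.symm, if_true]
    linarith
  · simp [stSupply, hvs, hvt, hx v hvs hvt]

end NetOutflow

def energy {V : Type*} (A : Finset (V × V)) (β x : V × V → ℝ) : ℝ :=
  ∑ a ∈ A, β a * |x a| ^ 3

section Energy

variable {V : Type*} {A : Finset (V × V)} {β : V × V → ℝ}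

theorem energy_nonneg (hβ : ∀ a ∈ A, 0 < β a) (x : V × V → ℝ) : 0 ≤ energy A β x :=
  Finset.sum_nonneg fun a ha => mul_nonneg (hβ a ha).le (by positivity)

theorem energy_inducedFlow (hβ : ∀ a ∈ A, 0 < β a) (π : V → ℝ) :
    energy A β (inducedFlow β π) = ∑ a ∈ A, inducedFlow β π a * (π a.1 - π a.2) := by
  refine Finset.sum_congr rfl fun a ha => ?_
  rw [← mul_inducedFlow_mul_abs (hβ a ha), pow_succ, sq_abs]
  ring

theorem three_mul_sum_le_energy_add (hβ : ∀ a ∈ A, 0 < β a) (x : V × V → ℝ) (π : V → ℝ) :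
    3 * ∑ a ∈ A, x a * (π a.1 - π a.2) ≤ energy A β x + 2 * energy A β (inducedFlow β π) := by
  simp only [energy, Finset.mul_sum, ← Finset.sum_add_distrib]
  refine Finset.sum_le_sum fun a ha => ?_
  rw [← mul_inducedFlow_mul_abs (hβ a ha)]
  nlinarith [mul_le_mul_of_nonneg_left (three_mul_mul_mul_abs_le (x a) (inducedFlow β π a))
    (hβ a ha).le]

theorem energy_average_le (hβ : ∀ a ∈ A, 0 < β a) (π₁ π₂ : V → ℝ) :
    energy A β (fun a => (inducedFlow β π₁ a + inducedFlow β π₂ a) / 2) ≤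
      ∑ a ∈ A, (inducedFlow β π₁ a + inducedFlow β π₂ a) / 2 *
        ((π₁ a.1 + π₂ a.1) / 2 - (π₁ a.2 + π₂ a.2) / 2) := by
  refine Finset.sum_le_sum fun a ha => ?_
  have hdrop : (π₁ a.1 + π₂ a.1) / 2 - (π₁ a.2 + π₂ a.2) / 2 =
      β a * ((inducedFlow β π₁ a * |inducedFlow β π₁ a| +
        inducedFlow β π₂ a * |inducedFlow β π₂ a|) / 2) := by
    linear_combination -(mul_inducedFlow_mul_abs (π := π₁) (hβ a ha) +
      mul_inducedFlow_mul_abs (π := π₂) (hβ a ha)) / 2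
  rw [hdrop]
  nlinarith [mul_le_mul_of_nonneg_left
    (abs_add_div_two_pow_three_le (inducedFlow β π₁ a) (inducedFlow β π₂ a)) (hβ a ha).le]

end Energy

theorem le_two_mul_balance_of_mem_twoStageValues {V : Type*} [Fintype V] [DecidableEq V]
    {A : Finset (V × V)} {β : V × V → ℝ} (hβ : ∀ a ∈ A, 0 < β a) {s t : V}
    (hst : s ≠ t) {πmin πmax : ℝ} {π : V → ℝ} (hπ : ∀ v, πmin ≤ π v ∧ π v ≤ πmax)
    (hs : π s = πmax) (ht : π t = πmin)
    (hflow : netOutflow A (inducedFlow β π) = stSupply s t (balance A β π s)) {q : ℝ}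
    (hq : q ∈ twoStageValues A β s t πmin πmax) : q ≤ 2 * balance A β π s := by
  obtain ⟨π₁, π₂, h₁, h₂, hbal⟩ := hq
  have hsupply := hbal s
  simp only [if_true] at hsupply
  rcases (show πmin ≤ πmax by linarith [hπ s]).eq_or_lt with hΔ | hΔ
  · have hconst : ∀ π' : V → ℝ, (∀ v, πmin ≤ π' v ∧ π' v ≤ πmax) → ∀ v, π' v = πmin :=
      fun π' h v => le_antisymm (hΔ ▸ (h v).2) (h v).1
    simp only [balance_eq_zero_of_forall_eq A β (hconst _ h₁),
      balance_eq_zero_of_forall_eq A β (hconst _ h₂),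
      balance_eq_zero_of_forall_eq A β (hconst _ hπ)] at hsupply ⊢
    linarith
  have hy : energy A β (inducedFlow β π) = balance A β π s * (πmax - πmin) := by
    rw [energy_inducedFlow hβ, sum_mul_sub_eq_of_netOutflow_eq_stSupply A hst hflow, hs, ht]
  have hq' : 0 ≤ balance A β π s :=
    nonneg_of_mul_nonneg_left (hy ▸ energy_nonneg hβ _) (sub_pos.2 hΔ)
  rcases le_or_gt q 0 with hq0 | hq0
  · linarith
  set x := fun a => (inducedFlow β π₁ a + inducedFlow β π₂ a) / 2
  have hx : netOutflow A x = stSupply s t (q / 2) := by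
    ext v
    rw [netOutflow_add_div_two, ← balance_eq_netOutflow, ← balance_eq_netOutflow, hbal v]
    unfold stSupply
    split_ifs <;> ring
  have hx_energy : energy A β x ≤ q / 2 * (πmax - πmin) := by
    refine (energy_average_le hβ π₁ π₂).trans ?_
    rw [sum_mul_sub_eq_of_netOutflow_eq_stSupply A hst hx (fun v => (π₁ v + π₂ v) / 2)]
    nlinarith [h₁ s, h₂ s, h₁ t, h₂ t]
  have hyoung := three_mul_sum_le_energy_add hβ x π
  rw [sum_mul_sub_eq_of_netOutflow_eq_stSupply A hst hx, hs, ht, hy] at hyoung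
  have hscaled : q * (πmax - πmin) ≤ 2 * balance A β π s * (πmax - πmin) := by linarith
  exact le_of_mul_le_mul_right hscaled (sub_pos.2 hΔ)

theorem two_mul_mem_twoStageValues {V : Type*} [Fintype V] [DecidableEq V]
    {A : Finset (V × V)} {β : V × V → ℝ} {s t : V} {πmin πmax p : ℝ}
    (hp : p ∈ statValues A β s t πmin πmax) : 2 * p ∈ twoStageValues A β s t πmin πmax := by
  obtain ⟨π, hπ, hbal⟩ := hp
  refine ⟨π, π, hπ, hπ, fun v => ?_⟩
  rw [hbal v]
  split_ifs <;> ring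

section DualEnergy

variable {V : Type*} (A : Finset (V × V)) (β : V × V → ℝ)

/-- The co-content of the network: its gradient is `3/2 · balance`, so its minimisers with fixed
`π s` and `π t` conserve flow at every other node. -/
noncomputable def dualEnergy (π : V → ℝ) : ℝ :=
  ∑ a ∈ A, |π a.1 - π a.2| ^ (3 / 2 : ℝ) / √(β a)

theorem continuous_dualEnergy : Continuous (dualEnergy A β) := by
  unfold dualEnergy
  fun_prop (disch := norm_num)

theorem dualEnergy_projIcc_le {lo hi : ℝ} (h : lo ≤ hi) (π : V → ℝ) :
    dualEnergy A β (fun v => (Set.projIcc lo hi h (π v) : ℝ)) ≤ dualEnergy A β π :=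
  Finset.sum_le_sum fun a _ => div_le_div_of_nonneg_right
    (Real.rpow_le_rpow (abs_nonneg _) (Set.abs_projIcc_sub_projIcc h) (by norm_num))
    (Real.sqrt_nonneg _)

variable [Fintype V] [DecidableEq V]

theorem hasDerivAt_dualEnergy_add_smul (π ψ : V → ℝ) :
    HasDerivAt (fun ε : ℝ => dualEnergy A β (π + ε • ψ))
      (3 / 2 * ∑ v, balance A β π v * ψ v) 0 := by
  simp only [balance_eq_netOutflow, ← sum_mul_sub_eq_sum_netOutflow_mul, Finset.mul_sum]
  refine HasDerivAt.fun_sum fun a _ => ?_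
  have hdrop : HasDerivAt (fun ε : ℝ => (π + ε • ψ) a.1 - (π + ε • ψ) a.2) (ψ a.1 - ψ a.2) 0 := by
    have hlin : (fun ε : ℝ => (π + ε • ψ) a.1 - (π + ε • ψ) a.2) =
        fun ε => π a.1 - π a.2 + ε * (ψ a.1 - ψ a.2) := by
      ext ε
      simp only [Pi.add_apply, Pi.smul_apply, smul_eq_mul]
      ring
    rw [hlin]
    simpa using (hasDerivAt_mul_const (ψ a.1 - ψ a.2)).const_add (π a.1 - π a.2)
  have hcomp := (hasDerivAt_abs_rpow_three_halves_div_sqrt (β a) (π a.1 - π a.2)).comp_of_eq 0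
    hdrop (by simp)
  refine hcomp.congr_deriv ?_
  simp only [inducedFlow]
  ring

theorem exists_boundary_potential_balance_eq_zero {s t : V} (hst : s ≠ t) {πmin πmax : ℝ}
    (hπ : πmin ≤ πmax) :
    ∃ π : V → ℝ, (∀ v, πmin ≤ π v ∧ π v ≤ πmax) ∧ π s = πmax ∧ π t = πmin ∧
      ∀ v, v ≠ s → v ≠ t → balance A β π v = 0 := by
  set K : Set (V → ℝ) := Set.univ.pi (fun _ => Set.Icc πmin πmax) ∩ {π | π s = πmax ∧ π t = πmin}
  have hK : IsCompact K := (isCompact_univ_pi fun _ => isCompact_Icc).inter_right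
    ((isClosed_eq (continuous_apply s) continuous_const).inter
      (isClosed_eq (continuous_apply t) continuous_const))
  have hKne : K.Nonempty := ⟨fun v => if v = s then πmax else πmin,
    fun v _ => by dsimp only; split_ifs <;> simp [hπ], by simp [hst.symm]⟩
  obtain ⟨π, ⟨hbox, hs, ht⟩, hmin⟩ :=
    hK.exists_isMinOn hKne (continuous_dualEnergy A β).continuousOn
  refine ⟨π, fun v => hbox v trivial, hs, ht, fun v hvs hvt => ?_⟩
  -- Clamping into `[πmin, πmax]` keeps the boundary values and does not increase `dualEnergy`.
  have hglobal : ∀ π' : V → ℝ, π' s = πmax → π' t = πmin →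
      dualEnergy A β π ≤ dualEnergy A β π' := by
    intro π' hs' ht'
    refine (hmin ⟨fun v _ => (Set.projIcc πmin πmax hπ (π' v)).2, ?_, ?_⟩).trans
      (dualEnergy_projIcc_le A β hπ π')
    · simp [hs', Set.projIcc_right]
    · simp [ht', Set.projIcc_left]
  have hlocal : IsLocalMin (fun ε : ℝ => dualEnergy A β (π + ε • Pi.single v 1)) 0 :=
    Filter.Eventually.of_forall fun ε => by
      simpa using hglobal _ (by simp [hs, Ne.symm hvs]) (by simp [ht, Ne.symm hvt])
  have hderiv := hlocal.hasDerivAt_eq_zero (hasDerivAt_dualEnergy_add_smul A β π (Pi.single v 1))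
  simpa [Pi.single_apply] using hderiv

end DualEnergy

end GasFlow

/-- The maximum value of a feasible 2-stage gas s-t-flow is twice the maximum value of a
feasible stationary gas s-t-flow (Theorem 3 of the paper): doubling a maximum feasible
stationary gas s-t-flow is optimal for the maximum 2-stage gas s-t-flow problem. -/
theorem max_two_stage_eq_two_mul_max_stationary {V : Type*} [Fintype V] [DecidableEq V]
    (A : Finset (V × V)) (β : V × V → ℝ) (hβ : ∀ a ∈ A, 0 < β a)
    (s t : V) (hst : s ≠ t) (πmin πmax : ℝ) (hπ : πmin ≤ πmax) :
    sSup (twoStageValues A β s t πmin πmax) = 2 * sSup (statValues A β s t πmin πmax) := by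
  obtain ⟨π, hbox, hs, ht, hconserve⟩ :=
    GasFlow.exists_boundary_potential_balance_eq_zero A β hst hπ
  have hflow := GasFlow.netOutflow_eq_stSupply A hst hconserve
  have hstat : balance A β π s ∈ statValues A β s t πmin πmax := ⟨π, hbox, congrFun hflow⟩
  have hbound : ∀ q ∈ twoStageValues A β s t πmin πmax, q ≤ 2 * balance A β π s :=
    fun q hq => GasFlow.le_two_mul_balance_of_mem_twoStageValues hβ hst hbox hs ht hflow hq
  have htwo : IsGreatest (twoStageValues A β s t πmin πmax) (2 * balance A β π s) :=
    ⟨GasFlow.two_mul_mem_twoStageValues hstat, hbound⟩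
  have hone : IsGreatest (statValues A β s t πmin πmax) (balance A β π s) :=
    ⟨hstat, fun p hp => by linarith [hbound _ (GasFlow.two_mul_mem_twoStageValues hp)]⟩
  rw [htwo.csSup_eq, hone.csSup_eq]
end

section
/- Let G be a finite directed graph with node set V and arc set A ⊆ V × V, arc resistances β : A → ℝ with β_a > 0, and potential interval [π_min, π_max]. Let π¹, π² : V → ℝ be node potentials with π_min ≤ π^i_v ≤ π_max for all v and i = 1, 2, inducing stationary gas flows x¹ and x². Let π̄ = (π¹ + π²)/2 with induced stationary gas flow x̄, and let x̃ = (x¹ + x²)/2. Then x̄ is a feasible stationary gas flow, and for every arc a ∈ A, sgn(x̄_a) = sgn(x̃_a) and |x̄_a| ≥ |x̃_a|. -/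
open Finset

/-- Signed square root. -/
noncomputable def sqrtSgn (d : ℝ) : ℝ := Real.sqrt d - Real.sqrt (-d)

lemma sqrtSgn_eq (d : ℝ) : Real.sign d * Real.sqrt |d| = sqrtSgn d := by
  unfold sqrtSgn
  rcases lt_trichotomy d 0 with h | h | h
  · rw [Real.sign_of_neg h, abs_of_neg h, Real.sqrt_eq_zero'.mpr h.le]
    ring
  · simp [h]
  · rw [Real.sign_of_pos h, abs_of_pos h,
      Real.sqrt_eq_zero'.mpr (by linarith : -d ≤ 0)]
    ring

lemma sqrtSgn_neg (d : ℝ) : sqrtSgn (-d) = - sqrtSgn d := by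
  simp only [sqrtSgn, neg_neg]; ring

lemma sqrtSgn_strictMono : StrictMono sqrtSgn := by
  intro a b hab
  unfold sqrtSgn
  rcases le_or_gt 0 a with ha | ha
  · rw [Real.sqrt_eq_zero'.mpr (by linarith : -a ≤ 0),
      Real.sqrt_eq_zero'.mpr (by linarith : -b ≤ 0)]
    have := Real.sqrt_lt_sqrt ha hab
    linarith
  · rcases le_or_gt 0 b with hb | hb
    · rw [Real.sqrt_eq_zero'.mpr ha.le, Real.sqrt_eq_zero'.mpr (by linarith : -b ≤ 0)]
      have h1 : 0 < Real.sqrt (-a) := Real.sqrt_pos.mpr (by linarith)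
      have h2 : 0 ≤ Real.sqrt b := Real.sqrt_nonneg b
      linarith
    · rw [Real.sqrt_eq_zero'.mpr ha.le, Real.sqrt_eq_zero'.mpr hb.le]
      have := Real.sqrt_lt_sqrt (by linarith : (0:ℝ) ≤ -b) (by linarith : -b < -a)
      linarith

lemma sqrtSgn_of_nonneg {d : ℝ} (h : 0 ≤ d) : sqrtSgn d = Real.sqrt d := by
  unfold sqrtSgn; rw [Real.sqrt_eq_zero'.mpr (by linarith : -d ≤ 0)]; ring

lemma sqrtSgn_zero : sqrtSgn 0 = 0 := by simp [sqrtSgn]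

/-- helper: `x ≤ 2√m` when `x² ≤ 4m`. -/
lemma le_two_sqrt {x m : ℝ} (hm : 0 ≤ m) (h : x ^ 2 ≤ 4 * m) : x ≤ 2 * Real.sqrt m := by
  nlinarith [Real.sq_sqrt hm, Real.sqrt_nonneg m, sq_nonneg (x - 2 * Real.sqrt m),
    sq_nonneg (x + 2 * Real.sqrt m)]

/-- The key concavity-type inequality. -/
lemma sqrtSgn_key (d₁ d₂ : ℝ) (h : 0 ≤ d₁ + d₂) :
    sqrtSgn d₁ + sqrtSgn d₂ ≤ 2 * sqrtSgn ((d₁ + d₂) / 2) := by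
  wlog hle : d₁ ≤ d₂ generalizing d₁ d₂
  · have := this d₂ d₁ (by linarith) (by linarith)
    rw [add_comm d₂ d₁] at this; linarith
  have hd₂ : 0 ≤ d₂ := by linarith
  have hm : 0 ≤ (d₁ + d₂) / 2 := by linarith
  rw [sqrtSgn_of_nonneg hd₂, sqrtSgn_of_nonneg hm]
  rcases le_or_gt 0 d₁ with h₁ | h₁
  · rw [sqrtSgn_of_nonneg h₁]
    apply le_two_sqrt hm
    nlinarith [Real.sq_sqrt h₁, Real.sq_sqrt hd₂, Real.sqrt_nonneg d₁, Real.sqrt_nonneg d₂,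
      sq_nonneg (Real.sqrt d₁ - Real.sqrt d₂)]
  · have : sqrtSgn d₁ = - Real.sqrt (-d₁) := by
      unfold sqrtSgn; rw [Real.sqrt_eq_zero'.mpr h₁.le]; ring
    rw [this]
    apply le_two_sqrt hm
    have hna : (0:ℝ) ≤ -d₁ := by linarith
    have hab : Real.sqrt (-d₁) ≤ Real.sqrt d₂ := Real.sqrt_le_sqrt (by linarith)
    nlinarith [Real.sq_sqrt hna, Real.sq_sqrt hd₂, Real.sqrt_nonneg (-d₁), Real.sqrt_nonneg d₂,
      sq_nonneg (Real.sqrt d₂ - Real.sqrt (-d₁)), sq_nonneg (Real.sqrt d₂ + Real.sqrt (-d₁))]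

lemma sign_congr {x y : ℝ} (h1 : x < 0 ↔ y < 0) (h2 : 0 < x ↔ 0 < y) :
    Real.sign x = Real.sign y := by
  rcases lt_trichotomy x 0 with h | h | h
  · rw [Real.sign_of_neg h, Real.sign_of_neg (h1.mp h)]
  · have hy1 : ¬ y < 0 := by intro hy; have := h1.mpr hy; linarith
    have hy2 : ¬ 0 < y := by intro hy; have := h2.mpr hy; linarith
    have : y = 0 := le_antisymm (not_lt.mp hy2) (not_lt.mp hy1)
    rw [h, this]
  · rw [Real.sign_of_pos h, Real.sign_of_pos (h2.mp h)]

lemma sign_div_pos {x c : ℝ} (hc : 0 < c) : Real.sign (x / c) = Real.sign x := by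
  apply sign_congr
  · constructor
    · intro h; by_contra h'
      exact absurd (div_nonneg (not_lt.mp h') hc.le) (not_le.mpr h)
    · intro h; exact div_neg_of_neg_of_pos h hc
  · constructor
    · intro h; by_contra h'
      have : x / c ≤ 0 := div_nonpos_of_nonpos_of_nonneg (not_lt.mp h') hc.le
      linarith
    · intro h; exact div_pos h hc

/-- Scalar core of Lemma 4. -/
lemma sqrtSgn_avg (d₁ d₂ : ℝ) :
    Real.sign (sqrtSgn ((d₁ + d₂) / 2)) = Real.sign ((sqrtSgn d₁ + sqrtSgn d₂) / 2) ∧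
      |(sqrtSgn d₁ + sqrtSgn d₂) / 2| ≤ |sqrtSgn ((d₁ + d₂) / 2)| := by
  have main : ∀ e₁ e₂ : ℝ, 0 ≤ e₁ + e₂ →
      0 ≤ sqrtSgn ((e₁ + e₂) / 2) ∧ 0 ≤ sqrtSgn e₁ + sqrtSgn e₂ ∧
        sqrtSgn e₁ + sqrtSgn e₂ ≤ 2 * sqrtSgn ((e₁ + e₂) / 2) := by
    intro e₁ e₂ he
    refine ⟨?_, ?_, sqrtSgn_key e₁ e₂ he⟩
    · rw [sqrtSgn_of_nonneg (by linarith)]; exact Real.sqrt_nonneg _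
    · have : sqrtSgn (-e₂) ≤ sqrtSgn e₁ :=
        sqrtSgn_strictMono.monotone (by linarith)
      rw [sqrtSgn_neg] at this; linarith
  rcases le_or_gt 0 (d₁ + d₂) with h | h
  · obtain ⟨ha, hb, hc⟩ := main d₁ d₂ h
    constructor
    · apply sign_congr
      · constructor <;> intro h' <;> linarith
      · constructor
        · intro h'
          rcases lt_or_ge 0 (sqrtSgn d₁ + sqrtSgn d₂) with h'' | h''
          · linarith
          · -- sum = 0 forces d₁ = -d₂, so midpoint is 0, contradiction
            have hsum : sqrtSgn d₁ + sqrtSgn d₂ = 0 := le_antisymm h'' hb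
            have : sqrtSgn d₁ = sqrtSgn (-d₂) := by rw [sqrtSgn_neg]; linarith
            have hd : d₁ = -d₂ := sqrtSgn_strictMono.injective this
            have : (d₁ + d₂) / 2 = 0 := by rw [hd]; ring
            rw [this, sqrtSgn_zero] at h'; linarith
        · intro h'
          have h'' : 0 < sqrtSgn d₁ + sqrtSgn d₂ := by linarith
          rcases lt_or_ge 0 (sqrtSgn ((d₁ + d₂) / 2)) with h3 | h3
          · exact h3
          · have hmz : sqrtSgn ((d₁ + d₂) / 2) = 0 := le_antisymm h3 ha
            linarith
    · rw [abs_of_nonneg ha, abs_of_nonneg (by linarith : (0:ℝ) ≤ (sqrtSgn d₁ + sqrtSgn d₂) / 2)]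
      linarith
  · obtain ⟨ha, hb, hc⟩ := main (-d₁) (-d₂) (by linarith)
    rw [sqrtSgn_neg, sqrtSgn_neg] at hb hc
    have hmm : (-d₁ + -d₂) / 2 = -((d₁ + d₂) / 2) := by ring
    rw [hmm, sqrtSgn_neg] at ha hc
    constructor
    · apply sign_congr
      · constructor
        · intro h'
          rcases lt_or_ge (sqrtSgn d₁ + sqrtSgn d₂) 0 with h'' | h''
          · linarith
          · have hsum : sqrtSgn d₁ + sqrtSgn d₂ = 0 := le_antisymm (by linarith) h''
            have : sqrtSgn d₁ = sqrtSgn (-d₂) := by rw [sqrtSgn_neg]; linarith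
            have hd : d₁ = -d₂ := sqrtSgn_strictMono.injective this
            have hz : (d₁ + d₂) / 2 = 0 := by rw [hd]; ring
            rw [hz, sqrtSgn_zero] at h'; linarith
        · intro h'; linarith
      · constructor <;> intro h' <;> linarith
    · rw [abs_of_nonpos (by linarith : sqrtSgn ((d₁ + d₂) / 2) ≤ 0),
        abs_of_nonpos (by linarith : (sqrtSgn d₁ + sqrtSgn d₂) / 2 ≤ 0)]
      linarith

lemma inducedFlow_eq {V : Type*} (β : V × V → ℝ) (π : V → ℝ) (a : V × V) (hβ : 0 < β a) :
    inducedFlow β π a = sqrtSgn (π a.1 - π a.2) / Real.sqrt (β a) := by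
  unfold inducedFlow
  rw [Real.sqrt_div (abs_nonneg _), ← sqrtSgn_eq]
  ring

/-- Lemma 4 of the paper: the average potentials `π̄ = (π¹+π²)/2` induce a feasible
stationary gas flow `x̄` with `sgn(x̄ₐ) = sgn(x̃ₐ)` and `|x̄ₐ| ≥ |x̃ₐ|` for each arc `a`,
where `x̃ = (x¹+x²)/2`. -/
theorem average_potential_flow {V : Type*} [Fintype V] [DecidableEq V]
    (A : Finset (V × V)) (β : V × V → ℝ) (hβ : ∀ a ∈ A, 0 < β a)
    (πmin πmax : ℝ) (π₁ π₂ : V → ℝ)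
    (h₁ : ∀ v : V, πmin ≤ π₁ v ∧ π₁ v ≤ πmax)
    (h₂ : ∀ v : V, πmin ≤ π₂ v ∧ π₂ v ≤ πmax)
    (x₁ x₂ xbar xtilde : V × V → ℝ)
    (hx₁ : ∀ a ∈ A, x₁ a = inducedFlow β π₁ a)
    (hx₂ : ∀ a ∈ A, x₂ a = inducedFlow β π₂ a)
    (hxbar : ∀ a ∈ A, xbar a = inducedFlow β (fun v => (π₁ v + π₂ v) / 2) a)
    (hxtilde : ∀ a ∈ A, xtilde a = (x₁ a + x₂ a) / 2) :
    (∀ v : V, πmin ≤ (π₁ v + π₂ v) / 2 ∧ (π₁ v + π₂ v) / 2 ≤ πmax) ∧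
      ∀ a ∈ A, Real.sign (xbar a) = Real.sign (xtilde a) ∧ |xbar a| ≥ |xtilde a| := by
  constructor
  · intro v
    obtain ⟨a1, a2⟩ := h₁ v
    obtain ⟨b1, b2⟩ := h₂ v
    constructor <;> linarith
  · intro a ha
    have hb := hβ a ha
    have hc : 0 < Real.sqrt (β a) := Real.sqrt_pos.mpr hb
    set d₁ := π₁ a.1 - π₁ a.2 with hd₁
    set d₂ := π₂ a.1 - π₂ a.2 with hd₂
    have hbar : xbar a = sqrtSgn ((d₁ + d₂) / 2) / Real.sqrt (β a) := by
      rw [hxbar a ha, inducedFlow_eq _ _ _ hb]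
      have : (π₁ a.1 + π₂ a.1) / 2 - (π₁ a.2 + π₂ a.2) / 2 = (d₁ + d₂) / 2 := by
        rw [hd₁, hd₂]; ring
      simp only [this]
    have htilde : xtilde a = ((sqrtSgn d₁ + sqrtSgn d₂) / 2) / Real.sqrt (β a) := by
      rw [hxtilde a ha, hx₁ a ha, hx₂ a ha, inducedFlow_eq _ _ _ hb, inducedFlow_eq _ _ _ hb]
      rw [← hd₁, ← hd₂]; ring
    obtain ⟨hs, habs⟩ := sqrtSgn_avg d₁ d₂
    constructor
    · rw [hbar, htilde, sign_div_pos hc, sign_div_pos hc, hs]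
    · rw [hbar, htilde, abs_div, abs_div, abs_of_pos hc]
      gcongr
end

section
/- Let π_min < π* < π_max be real numbers. Let p¹_s, p²_s, p¹_t, p²_t, a, b be real numbers, all lying in the interval [π_min, π_max]. Suppose sgn(p¹_s − a)·√|p¹_s − a| + sgn(p²_s − b)·√|p²_s − b| = 2·√(π_max − π*) and sgn(a − p¹_t)·√|a − p¹_t| + sgn(b − p²_t)·√|b − p²_t| = 2·√(π* − π_min). Then a = b = π*. -/
/-- `sgn x * √|x| ≤ √y` whenever `x ≤ y` and `0 ≤ y`. -/
lemma sgn_sqrt_le {x y : ℝ} (hy : 0 ≤ y) (hxy : x ≤ y) :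
    Real.sign x * Real.sqrt |x| ≤ Real.sqrt y := by
  rcases le_or_gt x 0 with hx | hx
  · have hs : Real.sign x ≤ 0 := by
      rcases lt_or_eq_of_le hx with h | h
      · rw [Real.sign_of_neg h]; norm_num
      · simp [h]
    have : Real.sign x * Real.sqrt |x| ≤ 0 :=
      mul_nonpos_of_nonpos_of_nonneg hs (Real.sqrt_nonneg _)
    exact this.trans (Real.sqrt_nonneg y)
  · rw [Real.sign_of_pos hx, abs_of_pos hx, one_mul]
    exact Real.sqrt_le_sqrt hxy

/-- Concavity of sqrt: `√A + √B ≤ 2 √((A+B)/2)`. -/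
lemma sqrt_add_le_two_sqrt_avg {A B : ℝ} (hA : 0 ≤ A) (hB : 0 ≤ B) :
    Real.sqrt A + Real.sqrt B ≤ 2 * Real.sqrt ((A + B) / 2) := by
  have hs : (0:ℝ) ≤ (A + B) / 2 := by linarith
  have hu := Real.sq_sqrt hA
  have hv := Real.sq_sqrt hB
  have hw := Real.sq_sqrt hs
  have hu0 := Real.sqrt_nonneg A
  have hv0 := Real.sqrt_nonneg B
  have hw0 := Real.sqrt_nonneg ((A + B) / 2)
  nlinarith [sq_nonneg (Real.sqrt A - Real.sqrt B),
    sq_nonneg (Real.sqrt A + Real.sqrt B - 2 * Real.sqrt ((A + B) / 2)),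
    sq_nonneg (Real.sqrt A + Real.sqrt B + 2 * Real.sqrt ((A + B) / 2))]

/-- The potential-fixing gadget lemma (Section 6.1 of the paper): the two stage
potentials `a`, `b` of node `u` are forced to equal `πstar`. -/
theorem potential_fixing_gadget (πmin πstar πmax : ℝ)
    (h₁ : πmin < πstar) (h₂ : πstar < πmax)
    (p1s p2s p1t p2t a b : ℝ)
    (hp1s : πmin ≤ p1s ∧ p1s ≤ πmax) (hp2s : πmin ≤ p2s ∧ p2s ≤ πmax)
    (hp1t : πmin ≤ p1t ∧ p1t ≤ πmax) (hp2t : πmin ≤ p2t ∧ p2t ≤ πmax)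
    (ha : πmin ≤ a ∧ a ≤ πmax) (hb : πmin ≤ b ∧ b ≤ πmax)
    (heqs : Real.sign (p1s - a) * Real.sqrt |p1s - a| +
      Real.sign (p2s - b) * Real.sqrt |p2s - b| = 2 * Real.sqrt (πmax - πstar))
    (heqt : Real.sign (a - p1t) * Real.sqrt |a - p1t| +
      Real.sign (b - p2t) * Real.sqrt |b - p2t| = 2 * Real.sqrt (πstar - πmin)) :
    a = πstar ∧ b = πstar := by
  obtain ⟨ha1, ha2⟩ := ha
  obtain ⟨hb1, hb2⟩ := hb
  have hAa : (0:ℝ) ≤ πmax - a := by linarith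
  have hAb : (0:ℝ) ≤ πmax - b := by linarith
  have hBa : (0:ℝ) ≤ a - πmin := by linarith
  have hBb : (0:ℝ) ≤ b - πmin := by linarith
  -- upper bounds on each sign-sqrt term
  have h1 : 2 * Real.sqrt (πmax - πstar) ≤
      Real.sqrt (πmax - a) + Real.sqrt (πmax - b) := by
    rw [← heqs]
    gcongr <;> [exact sgn_sqrt_le hAa (by linarith [hp1s.2]);
      exact sgn_sqrt_le hAb (by linarith [hp2s.2])]
  have h2 : 2 * Real.sqrt (πstar - πmin) ≤
      Real.sqrt (a - πmin) + Real.sqrt (b - πmin) := by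
    rw [← heqt]
    gcongr <;> [exact sgn_sqrt_le hBa (by linarith [hp1t.1]);
      exact sgn_sqrt_le hBb (by linarith [hp2t.1])]
  have h3 := sqrt_add_le_two_sqrt_avg hAa hAb
  have h4 := sqrt_add_le_two_sqrt_avg hBa hBb
  -- from h1,h3 : πmax - πstar ≤ (2πmax - a - b)/2,  i.e. a + b ≤ 2 πstar
  have key1 : πmax - πstar ≤ (πmax - a + (πmax - b)) / 2 := by
    have := h1.trans h3
    have h' : Real.sqrt (πmax - πstar) ≤ Real.sqrt ((πmax - a + (πmax - b)) / 2) := by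
      linarith
    exact (Real.sqrt_le_sqrt_iff (by linarith)).mp h'
  have key2 : πstar - πmin ≤ (a - πmin + (b - πmin)) / 2 := by
    have := h2.trans h4
    have h' : Real.sqrt (πstar - πmin) ≤ Real.sqrt ((a - πmin + (b - πmin)) / 2) := by
      linarith
    exact (Real.sqrt_le_sqrt_iff (by linarith)).mp h'
  have hsum : a + b = 2 * πstar := by linarith
  -- equality case: avg = πmax - πstar
  have havg : (πmax - a + (πmax - b)) / 2 = πmax - πstar := by linarith
  have heq : Real.sqrt (πmax - a) + Real.sqrt (πmax - b) =
      2 * Real.sqrt (πmax - πstar) := by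
    rw [← havg] at h1 ⊢
    exact le_antisymm h3 h1
  -- deduce a = b
  have hu := Real.sq_sqrt hAa
  have hv := Real.sq_sqrt hAb
  have hw := Real.sq_sqrt (show (0:ℝ) ≤ πmax - πstar by linarith)
  have hd : (Real.sqrt (πmax - a) - Real.sqrt (πmax - b)) ^ 2 = 0 := by
    linear_combination 2 * hu + 2 * hv - 4 * hw -
      (Real.sqrt (πmax - a) + Real.sqrt (πmax - b) + 2 * Real.sqrt (πmax - πstar)) * heq -
      2 * hsum
  have huv : Real.sqrt (πmax - a) = Real.sqrt (πmax - b) := by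
    have := pow_eq_zero_iff (n := 2) (by norm_num) |>.mp hd
    linarith [sub_eq_zero.mp this]
  have hab : a = b := by
    rw [huv] at hu
    linarith
  constructor <;> linarith
end

section
/- Let x₁, x₂ be real numbers satisfying the two equations sgn(x₁)·√|x₁| + sgn(x₂)·√|x₂| = 2 and sgn(x₁ − 4/5)·√|x₁ − 4/5| + sgn(x₂ − 4/5)·√|x₂ − 4/5| = 2/√5. Then either x₁ = 1 and x₂ = 1, or {x₁, x₂} = {0, 4} (i.e., (x₁, x₂) = (0, 4) or (x₁, x₂) = (4, 0)). -/
set_option maxHeartbeats 1000000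

lemma sgn_sqrt_self (x : ℝ) :
    Real.sign x * Real.sqrt |x| * abs (Real.sign x * Real.sqrt |x|) = x := by
  rcases lt_trichotomy x 0 with h | h | h
  · rw [Real.sign_of_neg h, abs_of_neg h, neg_one_mul, abs_neg,
      abs_of_nonneg (Real.sqrt_nonneg _)]
    have h2 : Real.sqrt (-x) * Real.sqrt (-x) = -x := Real.mul_self_sqrt (by linarith)
    linear_combination -h2
  · simp [h]
  · rw [Real.sign_of_pos h, abs_of_pos h, one_mul,
      abs_of_nonneg (Real.sqrt_nonneg _)]
    exact Real.mul_self_sqrt h.le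

/-- The binary decision gadget (Section 6.2 of the paper): the two stage potentials of the
decision node are either both `1`, or take the values `0` and `4`. -/
theorem binary_decision_gadget (x₁ x₂ : ℝ)
    (h₁ : Real.sign x₁ * Real.sqrt |x₁| + Real.sign x₂ * Real.sqrt |x₂| = 2)
    (h₂ : Real.sign (x₁ - 4 / 5) * Real.sqrt |x₁ - 4 / 5| +
      Real.sign (x₂ - 4 / 5) * Real.sqrt |x₂ - 4 / 5| = 2 / Real.sqrt 5) :
    (x₁ = 1 ∧ x₂ = 1) ∨ (x₁ = 0 ∧ x₂ = 4) ∨ (x₁ = 4 ∧ x₂ = 0) := by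
  have hs0 : (0:ℝ) < Real.sqrt 5 := Real.sqrt_pos.mpr (by norm_num)
  set s := Real.sqrt 5 with hsdef
  have hs : s ^ 2 = 5 := Real.sq_sqrt (by norm_num)
  set a := Real.sign x₁ * Real.sqrt |x₁| with hadef
  set b := Real.sign x₂ * Real.sqrt |x₂| with hbdef
  set u := Real.sign (x₁ - 4 / 5) * Real.sqrt |x₁ - 4 / 5| with hudef
  set v := Real.sign (x₂ - 4 / 5) * Real.sqrt |x₂ - 4 / 5| with hvdef
  have ha : a * |a| = x₁ := sgn_sqrt_self x₁
  have hb : b * |b| = x₂ := sgn_sqrt_self x₂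
  have hu : u * |u| = x₁ - 4 / 5 := sgn_sqrt_self _
  have hv : v * |v| = x₂ - 4 / 5 := sgn_sqrt_self _
  have e1 : a + b = 2 := h₁
  have e2s : s * u + s * v = 2 := by
    rw [eq_div_iff (ne_of_gt hs0)] at h₂
    linear_combination h₂
  rcases le_or_gt 0 u with hU | hU
  · rw [abs_of_nonneg hU] at hu
    rcases le_or_gt 0 a with hA | hA
    · rw [abs_of_nonneg hA] at ha
      have e3 : a ^ 2 - u ^ 2 = 4 / 5 := by linear_combination ha - hu
      rcases le_or_gt 0 v with hV | hV
      · -- main case: everything nonnegative, forces x₁ = x₂ = 1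
        rw [abs_of_nonneg hV] at hv
        have hB : 0 ≤ b := by
          by_contra hB
          push_neg at hB
          nlinarith [mul_nonneg (neg_nonneg.2 hB.le) (abs_nonneg b),
            mul_self_nonneg v, hb, hv]
        rw [abs_of_nonneg hB] at hb
        have e4 : b ^ 2 - v ^ 2 = 4 / 5 := by linear_combination hb - hv
        have hd : 2 * (u - v) = 2 * s * (a - b) := by
          linear_combination (-s) * e3 + s * e4 + (-(u - v)) * e2s + s * (a - b) * e1
        have hD2 : (a - b) ^ 2 = 0 := by
          linear_combination ((a + b + 2) / 4) * e1 - ((s * u + s * v + 2) / 20) * e2s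
            - (1 / 2) * e3 - (1 / 2) * e4
            + ((u + v) ^ 2 / 20 - (a - b) ^ 2 / 4) * hs
            + (-(s * (a - b)) / 4 - (2 * (u - v) - 2 * s * (a - b)) / 16) * hd
        have hab : a - b = 0 := sq_eq_zero_iff.mp hD2
        have ha1 : a = 1 := by linarith
        have hb1 : b = 1 := by linarith
        exact Or.inl ⟨by linear_combination (a + 1) * ha1 - ha,
          by linear_combination (b + 1) * hb1 - hb⟩
      · -- v < 0
        rw [abs_of_neg hV] at hv
        rcases le_or_gt 0 b with hB | hB
        · -- forces x₁ = 4, x₂ = 0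
          rw [abs_of_nonneg hB] at hb
          have e4 : b ^ 2 + v ^ 2 = 4 / 5 := by linear_combination hb - hv
          have T1 : 10 * a = 12 + 5 * u ^ 2 - 2 * (s * u) := by
            linear_combination (5 / 2) * e3 + (5 / 2) * (b + 2 - a) * e1
              + (s * v / 2 - s * u / 2 + 1) * e2s - (5 / 2) * e4
              + ((u ^ 2 - v ^ 2) / 2) * hs
          have key : (s * u - 4) * ((s * u) ^ 3 + 8 * (s * u) - 16) = 0 := by
            linear_combination 100 * e3
              + (-10 * a - 12 - 5 * u ^ 2 + 2 * s * u) * T1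
              + ((s ^ 2 + 5) * u ^ 4 - 4 * s * u ^ 3 + 4 * u ^ 2) * hs
          have hm : 2 < s * u := by
            have h1 : s * v < 0 := mul_neg_of_pos_of_neg hs0 hV
            linarith
          have hQ : 0 < (s * u) ^ 3 + 8 * (s * u) - 16 := by
            nlinarith [mul_pos (by linarith : (0:ℝ) < s * u - 2)
              (by nlinarith [sq_nonneg (s * u + 1)] :
                (0:ℝ) < (s * u) ^ 2 + 2 * (s * u) + 12)]
          have hsu : s * u = 4 := by
            rcases mul_eq_zero.mp key with h | h
            · linarith
            · exfalso; linarith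
          have hu2 : 5 * u ^ 2 = 16 := by
            linear_combination (s * u + 4) * hsu - u ^ 2 * hs
          have ha2 : a = 2 := by linarith
          have hb0 : b = 0 := by linarith
          exact Or.inr (Or.inr ⟨by linear_combination (a + 2) * ha2 - ha,
            by linear_combination b * hb0 - hb⟩)
        · -- b < 0 : contradiction
          exfalso
          rw [abs_of_neg hB] at hb
          have e4 : v ^ 2 - b ^ 2 = 4 / 5 := by linear_combination hb - hv
          have T3 : s * v = 5 * b - 2 := by
            linear_combination (5 / 4) * e3 + (5 / 4) * e4
              - (5 / 4) * (a + 2 - b) * e1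
              + ((2 + s * u - s * v) / 4) * e2s + ((v ^ 2 - u ^ 2) / 4) * hs
          have T4 : b ^ 2 = b := by
            linear_combination (1 / 4) * e4 + (v ^ 2 / 20) * hs
              - ((5 * b - 2 + s * v) / 20) * T3
          nlinarith [sq_nonneg b]
    · -- a < 0, u ≥ 0 : contradiction
      exfalso
      rw [abs_of_neg hA] at ha
      nlinarith [mul_self_nonneg a, mul_self_nonneg u, ha, hu]
  · -- u < 0
    rw [abs_of_neg hU] at hu
    rcases le_or_gt 0 v with hV | hV
    · rw [abs_of_nonneg hV] at hv
      have hB : 0 ≤ b := by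
        by_contra hB
        push_neg at hB
        nlinarith [mul_nonneg (neg_nonneg.2 hB.le) (abs_nonneg b),
          mul_self_nonneg v, hb, hv]
      rw [abs_of_nonneg hB] at hb
      have e4 : b ^ 2 - v ^ 2 = 4 / 5 := by linear_combination hb - hv
      rcases le_or_gt 0 a with hA | hA
      · -- forces x₁ = 0, x₂ = 4
        rw [abs_of_nonneg hA] at ha
        have e3 : a ^ 2 + u ^ 2 = 4 / 5 := by linear_combination ha - hu
        have T1 : 10 * b = 12 + 5 * v ^ 2 - 2 * (s * v) := by
          linear_combination (5 / 2) * e4 + (5 / 2) * (a + 2 - b) * e1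
            + (s * u / 2 - s * v / 2 + 1) * e2s - (5 / 2) * e3
            + ((v ^ 2 - u ^ 2) / 2) * hs
        have key : (s * v - 4) * ((s * v) ^ 3 + 8 * (s * v) - 16) = 0 := by
          linear_combination 100 * e4
            + (-10 * b - 12 - 5 * v ^ 2 + 2 * s * v) * T1
            + ((s ^ 2 + 5) * v ^ 4 - 4 * s * v ^ 3 + 4 * v ^ 2) * hs
        have hm : 2 < s * v := by
          have h1 : s * u < 0 := mul_neg_of_pos_of_neg hs0 hU
          linarith
        have hQ : 0 < (s * v) ^ 3 + 8 * (s * v) - 16 := by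
          nlinarith [mul_pos (by linarith : (0:ℝ) < s * v - 2)
            (by nlinarith [sq_nonneg (s * v + 1)] :
              (0:ℝ) < (s * v) ^ 2 + 2 * (s * v) + 12)]
        have hsv : s * v = 4 := by
          rcases mul_eq_zero.mp key with h | h
          · linarith
          · exfalso; linarith
        have hv2 : 5 * v ^ 2 = 16 := by
          linear_combination (s * v + 4) * hsv - v ^ 2 * hs
        have hb2 : b = 2 := by linarith
        have ha0 : a = 0 := by linarith
        exact Or.inr (Or.inl ⟨by linear_combination a * ha0 - ha,
          by linear_combination (b + 2) * hb2 - hb⟩)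
      · -- a < 0 : contradiction
        exfalso
        rw [abs_of_neg hA] at ha
        have e3 : u ^ 2 - a ^ 2 = 4 / 5 := by linear_combination ha - hu
        have T3 : s * u = 5 * a - 2 := by
          linear_combination (5 / 4) * e4 + (5 / 4) * e3
            - (5 / 4) * (b + 2 - a) * e1
            + ((2 + s * v - s * u) / 4) * e2s + ((u ^ 2 - v ^ 2) / 4) * hs
        have T4 : a ^ 2 = a := by
          linear_combination (1 / 4) * e3 + (u ^ 2 / 20) * hs
            - ((5 * a - 2 + s * u) / 20) * T3
        nlinarith [sq_nonneg a]
    · -- u < 0, v < 0 : contradiction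
      exfalso
      have h1 : s * u < 0 := mul_neg_of_pos_of_neg hs0 hU
      have h2 : s * v < 0 := mul_neg_of_pos_of_neg hs0 hV
      linarith
end
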